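/- arXiv:2204.09009 — 6 statements merged into one kernel-verified Lean document; each statement's English description precedes it below -/
import Mathlib

section
/- For integers α ≥ 2, k ≥ 2, and n ≥ α·k, the number of stable k-subsets of {1,...,n} is at least (1 − 1/(α−1)²) · C(n-k+1, k). -/
open Finset

attribute [local instance] Classical.propDecidable

/-- `A` is a stable subset of `{1,...,n}`: no two cyclically consecutive elements. -/
def Stable (n : ℕ) (A : Finset ℕ) : Prop :=
  (∀ i ∈ A, i + 1 ∉ A) ∧ ¬(1 ∈ A ∧ n ∈ A)

/-- The collection of stable `k`-subsets of `{1,...,n}`. -/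
noncomputable def stableSets (n k : ℕ) : Finset (Finset ℕ) :=
  ((Finset.Icc 1 n).powersetCard k).filter (fun A => Stable n A)

/-!
Spreading `b ↦ b + rank s b`, where `rank s b` counts the elements of `s` below `b`, is a
bijection from the `k`-subsets of an interval of length `t + 1` onto the `k`-subsets without two
consecutive elements of an interval of length `t + k`; its inverse is `c ↦ c - rank s c`. Hence
there are `C(n - k + 1, k)` such subsets of `{1, …, n}`. Those that are not cyclically stable
contain both `1` and `n`, and removing these two leaves a `(k - 2)`-subset of `{3, …, n - 2}`
without consecutive elements, so there are at most `C(n - k - 1, k - 2)` of them. Finally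
`k (k - 1) C(n - k + 1, k) = (n - k + 1) (n - k) C(n - k - 1, k - 2)` together with
`(α - 1) k ≤ n - k` gives `(α - 1)² C(n - k - 1, k - 2) ≤ C(n - k + 1, k)`.
-/

def NoConsecutive (A : Finset ℕ) : Prop :=
  ∀ i ∈ A, i + 1 ∉ A

theorem NoConsecutive.mono {A B : Finset ℕ} (hB : NoConsecutive B) (hAB : A ⊆ B) :
    NoConsecutive A :=
  fun i hi hi' => hB i (hAB hi) (hAB hi')

noncomputable def noConsecutiveSets (s : Finset ℕ) (k : ℕ) : Finset (Finset ℕ) :=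
  (s.powersetCard k).filter NoConsecutive

theorem mem_noConsecutiveSets {s A : Finset ℕ} {k : ℕ} :
    A ∈ noConsecutiveSets s k ↔ (A ⊆ s ∧ #A = k) ∧ NoConsecutive A := by
  rw [noConsecutiveSets, mem_filter, mem_powersetCard]

noncomputable def rank (s : Finset ℕ) (b : ℕ) : ℕ :=
  #(s.filter (· < b))

theorem rank_lt_card {s : Finset ℕ} {b : ℕ} (hb : b ∈ s) : rank s b < #s :=
  card_lt_card (filter_ssubset.2 ⟨b, hb, lt_irrefl b⟩)

theorem rank_le_sub {s : Finset ℕ} {a : ℕ} (hs : ∀ x ∈ s, a ≤ x) (c : ℕ) : rank s c ≤ c - a := by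
  calc rank s c ≤ #(Ico a c) :=
        card_le_card fun x hx => by
          rw [mem_filter] at hx
          exact mem_Ico.2 ⟨hs x hx.1, hx.2⟩
    _ = c - a := Nat.card_Ico a c

theorem rank_le_self (s : Finset ℕ) (c : ℕ) : rank s c ≤ c :=
  rank_le_sub (fun _ _ => Nat.zero_le _) c

theorem rank_lt_rank {s : Finset ℕ} {a b : ℕ} (ha : a ∈ s) (hab : a < b) : rank s a < rank s b := by
  have hsub : s.filter (· < a) ⊆ s.filter (· < b) := fun x hx => by
    rw [mem_filter] at hx ⊢
    exact ⟨hx.1, hx.2.trans hab⟩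
  refine card_lt_card ((ssubset_iff_of_subset hsub).2 ⟨a, ?_, ?_⟩) <;> simp [ha, hab]

/-- `a + 1` lies strictly between `a` and `b` but is missing from `s`. -/
theorem NoConsecutive.rank_add_lt {s : Finset ℕ} (hs : NoConsecutive s) {a b : ℕ} (ha : a ∈ s)
    (hb : b ∈ s) (hab : a < b) : rank s b + a < rank s a + b := by
  have hab' : a + 1 < b := lt_of_le_of_ne hab fun h => hs a ha (h ▸ hb)
  have hsub : s.filter (· < b) ⊆ s.filter (· < a) ∪ (Ico a b).erase (a + 1) := by
    intro x hx
    rw [mem_filter] at hx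
    rcases lt_or_ge x a with hxa | hxa
    · exact mem_union_left _ (mem_filter.2 ⟨hx.1, hxa⟩)
    · refine mem_union_right _ (mem_erase.2 ⟨?_, mem_Ico.2 ⟨hxa, hx.2⟩⟩)
      rintro rfl
      exact hs a ha hx.1
  have := (card_le_card hsub).trans (card_union_le _ _)
  rw [card_erase_of_mem (mem_Ico.2 ⟨by omega, hab'⟩), Nat.card_Ico] at this
  unfold rank
  omega

theorem rank_image {s : Finset ℕ} {φ : ℕ → ℕ} (hφ : StrictMonoOn φ s) {b : ℕ} (hb : b ∈ s) :
    rank (s.image φ) (φ b) = rank s b := by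
  rw [rank, filter_image, card_image_of_injOn (hφ.injOn.mono (filter_subset _ _)), rank]
  congr 1
  exact filter_congr fun x hx => hφ.lt_iff_lt hx hb

noncomputable def spread (s : Finset ℕ) : Finset ℕ :=
  s.image fun b => b + rank s b

noncomputable def compress (s : Finset ℕ) : Finset ℕ :=
  s.image fun c => c - rank s c

theorem strictMonoOn_spread (s : Finset ℕ) : StrictMonoOn (fun b => b + rank s b) s :=
  fun _ ha _ _ hab => Nat.add_lt_add hab (rank_lt_rank ha hab)

theorem NoConsecutive.strictMonoOn_compress {s : Finset ℕ} (hs : NoConsecutive s) :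
    StrictMonoOn (fun c => c - rank s c) s := by
  intro a ha b hb hab
  have := hs.rank_add_lt ha hb hab
  have := rank_le_self s a
  dsimp only
  omega

theorem compress_spread (s : Finset ℕ) : compress (spread s) = s := by
  rw [compress, spread, image_image]
  refine (image_congr fun b hb => ?_).trans image_id
  simp only [Function.comp_apply, rank_image (strictMonoOn_spread s) hb, Nat.add_sub_cancel, id]

theorem NoConsecutive.spread_compress {s : Finset ℕ} (hs : NoConsecutive s) :
    spread (compress s) = s := by
  rw [compress, spread, image_image]
  refine (image_congr fun c hc => ?_).trans image_id
  simp only [Function.comp_apply, rank_image hs.strictMonoOn_compress hc, id]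
  exact Nat.sub_add_cancel (rank_le_self s c)

theorem spread_mem_noConsecutiveSets {a t k : ℕ} {s : Finset ℕ}
    (hs : s ∈ (Ico a (a + t + 1)).powersetCard k) :
    spread s ∈ noConsecutiveSets (Ico a (a + t + k)) k := by
  rw [mem_powersetCard] at hs
  obtain ⟨hsub, rfl⟩ := hs
  refine mem_noConsecutiveSets.2 ⟨⟨?_, card_image_of_injOn (strictMonoOn_spread s).injOn⟩, ?_⟩
  · intro x hx
    obtain ⟨b, hb, rfl⟩ := mem_image.1 hx
    have := mem_Ico.1 (hsub hb)
    have := rank_lt_card hb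
    exact mem_Ico.2 ⟨by omega, by omega⟩
  · rintro x hx hx'
    obtain ⟨b, hb, rfl⟩ := mem_image.1 hx
    obtain ⟨c, hc, hbc⟩ := mem_image.1 hx'
    rcases lt_trichotomy b c with h | rfl | h
    · have := rank_lt_rank hb h
      omega
    · omega
    · have := rank_lt_rank hc h
      omega

theorem compress_mem_powersetCard {a t k : ℕ} {s : Finset ℕ}
    (hs : s ∈ noConsecutiveSets (Ico a (a + t + k)) k) :
    compress s ∈ (Ico a (a + t + 1)).powersetCard k := by
  obtain ⟨⟨hsub, rfl⟩, hnc⟩ := mem_noConsecutiveSets.1 hs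
  refine mem_powersetCard.2 ⟨?_, card_image_of_injOn hnc.strictMonoOn_compress.injOn⟩
  intro x hx
  obtain ⟨c, hc, rfl⟩ := mem_image.1 hx
  have hne : s.Nonempty := ⟨c, hc⟩
  have hmax := max'_mem s hne
  have hrank_max : rank s (s.max' hne) = #s - 1 := by
    rw [rank, ← card_erase_of_mem hmax]
    congr 1
    ext x
    simpa [and_comm] using fun hx => (le_max' s x hx).lt_iff_ne
  have := mem_Ico.1 (hsub hc)
  have := mem_Ico.1 (hsub hmax)
  have := rank_le_sub (fun x hx => (mem_Ico.1 (hsub hx)).1) c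
  have := rank_lt_card hc
  have : c - rank s c ≤ s.max' hne - rank s (s.max' hne) :=
    hnc.strictMonoOn_compress.monotoneOn hc hmax (le_max' s c hc)
  exact mem_Ico.2 ⟨by omega, by omega⟩

theorem card_noConsecutiveSets_Ico (a t k : ℕ) :
    #(noConsecutiveSets (Ico a (a + t + k)) k) = (t + 1).choose k := by
  have hcard : #(Ico a (a + t + 1)) = t + 1 := by rw [Nat.card_Ico]; omega
  rw [← hcard, ← card_powersetCard]
  exact (card_nbij' spread compress (fun _ => spread_mem_noConsecutiveSets)
    (fun _ => compress_mem_powersetCard) (fun s _ => compress_spread s)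
    (fun _ hs => (mem_noConsecutiveSets.1 hs).2.spread_compress)).symm

theorem stableSets_eq_filter (n k : ℕ) :
    stableSets n k = (noConsecutiveSets (Icc 1 n) k).filter fun A => ¬(1 ∈ A ∧ n ∈ A) := by
  ext A
  simp only [stableSets, noConsecutiveSets, mem_filter]
  simp only [Stable, NoConsecutive, and_assoc]

theorem card_noConsecutiveSets_Icc_one {n k : ℕ} (hkn : k ≤ n) :
    #(noConsecutiveSets (Icc 1 n) k) = (n - k + 1).choose k := by
  rw [← card_noConsecutiveSets_Ico 1]
  congr 2
  ext x
  simp only [mem_Icc, mem_Ico]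
  omega

theorem card_filter_one_mem_and_mem_le {n k : ℕ} (hk : 2 ≤ k) (hkn : k + 2 ≤ n) :
    #((noConsecutiveSets (Icc 1 n) k).filter fun A => 1 ∈ A ∧ n ∈ A) ≤
      (n - k - 1).choose (k - 2) := by
  have hcore : n - 1 = 3 + (n - k - 2) + (k - 2) := by omega
  have hpair : ∀ A ∈ (noConsecutiveSets (Icc 1 n) k).filter fun A => 1 ∈ A ∧ n ∈ A,
      {1, n} ⊆ A := fun A hA => by
    obtain ⟨-, h1, hn⟩ := mem_filter.1 hA
    exact insert_subset h1 (singleton_subset_iff.2 hn)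
  rw [show n - k - 1 = n - k - 2 + 1 by omega, ← card_noConsecutiveSets_Ico 3, ← hcore]
  refine card_le_card_of_injOn (· \ {1, n}) (fun A hA => ?_) (fun A hA B hB hAB => ?_)
  · obtain ⟨hA', h1, hn⟩ := mem_filter.1 hA
    obtain ⟨⟨hsub, hcard⟩, hnc⟩ := mem_noConsecutiveSets.1 hA'
    refine mem_noConsecutiveSets.2 ⟨⟨fun x hx => ?_, ?_⟩, hnc.mono sdiff_subset⟩
    · rw [mem_sdiff, mem_insert, mem_singleton] at hx
      have := mem_Icc.1 (hsub hx.1)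
      have h2 : x ≠ 2 := by
        rintro rfl
        exact hnc 1 h1 hx.1
      have hn1 : x + 1 ≠ n := fun h => hnc x hx.1 (h ▸ hn)
      exact mem_Ico.2 ⟨by omega, by omega⟩
    · rw [card_sdiff_of_subset (hpair A hA), card_pair (by omega), hcard]
  · rw [← sdiff_union_of_subset (hpair A hA), ← sdiff_union_of_subset (hpair B hB)]
    exact congrArg (· ∪ {1, n}) hAB

theorem choose_le_card_stableSets_add {n k : ℕ} (hk : 2 ≤ k) (hkn : k + 2 ≤ n) :
    (n - k + 1).choose k ≤ #(stableSets n k) + (n - k - 1).choose (k - 2) := by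
  have hsplit := card_filter_add_card_filter_not (s := noConsecutiveSets (Icc 1 n) k)
    (fun A => 1 ∈ A ∧ n ∈ A)
  rw [card_noConsecutiveSets_Icc_one (by omega)] at hsplit
  rw [stableSets_eq_filter]
  have := card_filter_one_mem_and_mem_le hk hkn
  omega

theorem sq_mul_choose_sub_two_le {c m k : ℕ} (hk : 2 ≤ k) (h : c * k ≤ m + 1) :
    c ^ 2 * m.choose (k - 2) ≤ (m + 2).choose k := by
  obtain ⟨j, rfl⟩ : ∃ j, k = j + 2 := ⟨k - 2, by omega⟩
  rw [Nat.add_sub_cancel]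
  have hpascal : (m + 2) * (m + 1) * m.choose j = (m + 2).choose (j + 2) * ((j + 2) * (j + 1)) := by
    rw [mul_assoc, Nat.add_one_mul_choose_eq, ← mul_assoc, Nat.add_one_mul_choose_eq]
    ring
  have hsq : c ^ 2 * ((j + 2) * (j + 1)) ≤ (m + 2) * (m + 1) :=
    calc c ^ 2 * ((j + 2) * (j + 1)) = (c * (j + 2)) * (c * (j + 1)) := by ring
      _ ≤ (m + 1) * (m + 1) := Nat.mul_le_mul h (le_trans (by gcongr; omega) h)
      _ ≤ (m + 2) * (m + 1) := by gcongr; omega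
  refine Nat.le_of_mul_le_mul_right ?_ (by positivity : 0 < (j + 2) * (j + 1))
  calc c ^ 2 * m.choose j * ((j + 2) * (j + 1))
        = c ^ 2 * ((j + 2) * (j + 1)) * m.choose j := by ring
    _ ≤ (m + 2) * (m + 1) * m.choose j := Nat.mul_le_mul_right _ hsq
    _ = (m + 2).choose (j + 2) * ((j + 2) * (j + 1)) := hpascal

theorem stmt_3 (α n k : ℕ) (hα : 2 ≤ α) (hk : 2 ≤ k) (hn : α * k ≤ n) :
    (1 - 1 / ((α : ℝ) - 1) ^ 2) * (Nat.choose (n - k + 1) k : ℝ)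
      ≤ ((stableSets n k).card : ℝ) := by
  have hkn : k + 2 ≤ n := by nlinarith
  have hcount := choose_le_card_stableSets_add hk hkn
  have hratio : (α - 1) ^ 2 * (n - k - 1).choose (k - 2) ≤ (n - k + 1).choose k := by
    rw [show n - k + 1 = n - k - 1 + 2 by omega]
    refine sq_mul_choose_sub_two_le hk ?_
    rw [Nat.sub_one_mul]
    omega
  have hcountR : ((n - k + 1).choose k : ℝ) ≤ #(stableSets n k) + (n - k - 1).choose (k - 2) := by
    exact_mod_cast hcount
  have hratioR : ((α : ℝ) - 1) ^ 2 * (n - k - 1).choose (k - 2) ≤ (n - k + 1).choose k := by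
    have := (Nat.cast_le (α := ℝ)).2 hratio
    push_cast [Nat.cast_sub (by omega : 1 ≤ α)] at this
    exact this
  have hpos : (0 : ℝ) < ((α : ℝ) - 1) ^ 2 := by
    have : (2 : ℝ) ≤ α := by exact_mod_cast hα
    exact pow_pos (by linarith) 2
  have hbad : ((n - k - 1).choose (k - 2) : ℝ) ≤ (n - k + 1).choose k / ((α : ℝ) - 1) ^ 2 := by
    rw [le_div_iff₀ hpos]
    linarith
  calc (1 - 1 / ((α : ℝ) - 1) ^ 2) * ((n - k + 1).choose k : ℝ)
      = (n - k + 1).choose k - (n - k + 1).choose k / ((α : ℝ) - 1) ^ 2 := by ring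
    _ ≤ (#(stableSets n k) : ℝ) := by linarith
end

section
/- For integers k ≥ 2 and n ≥ 2k, if F is a family of stable k-subsets of {1,...,n} such that every element of {1,...,n} belongs to at most γ·|F| members of F (for some γ ∈ (0,1]), then every subfamily F' ⊆ F with |F'| ≥ γ·|F| + k²·C(n-k-2, k-2) contains two disjoint sets. -/
open Finset

attribute [local instance] Classical.propDecidable

namespace StmtAux

/-- Number of sparse (no two consecutive) `j`-subsets of `{1,…,m}` is at most `C(m+1-j, j)`. -/
lemma sparse_count (m : ℕ) : ∀ j : ℕ, (((Finset.Icc 1 m).powerset).filter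
    (fun T => T.card = j ∧ ∀ x ∈ T, x + 1 ∉ T)).card ≤ (m + 1 - j).choose j := by
  induction m using Nat.strong_induction_on with
  | _ m ih =>
    intro j
    match j with
    | 0 =>
      have hsub : (((Finset.Icc 1 m).powerset).filter
          (fun T => T.card = 0 ∧ ∀ x ∈ T, x + 1 ∉ T)) ⊆ {∅} := by
        intro T hT
        simp only [mem_filter, mem_powerset] at hT
        simp [Finset.card_eq_zero.mp hT.2.1]
      calc _ ≤ ({∅} : Finset (Finset ℕ)).card := card_le_card hsub
        _ = 1 := rfl
        _ ≤ _ := by simp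
    | j + 1 =>
      match m with
      | 0 =>
        have : (((Finset.Icc 1 0).powerset).filter
            (fun T => T.card = j + 1 ∧ ∀ x ∈ T, x + 1 ∉ T)) = ∅ := by
          apply Finset.eq_empty_of_forall_notMem
          intro T hT
          simp only [mem_filter, mem_powerset] at hT
          have hle := Finset.card_le_card hT.1
          rw [Nat.card_Icc] at hle
          omega
        rw [this]; simp
      | m + 1 =>
        set P := (((Finset.Icc 1 (m+1)).powerset).filter
            (fun T => T.card = j + 1 ∧ ∀ x ∈ T, x + 1 ∉ T)) with hP
        by_cases hjm : j ≤ m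
        · have hsplit := Finset.card_filter_add_card_filter_not
            (s := P) (p := fun T => m + 1 ∈ T)
          -- bound part without m+1
          have h0 : (P.filter (fun T => ¬ m + 1 ∈ T)).card ≤ (m - j).choose (j+1) := by
            have hsub : P.filter (fun T => ¬ m + 1 ∈ T) ⊆
                (((Finset.Icc 1 m).powerset).filter
                  (fun T => T.card = j + 1 ∧ ∀ x ∈ T, x + 1 ∉ T)) := by
              intro T hT
              simp only [hP, mem_filter, mem_powerset] at hT ⊢
              refine ⟨fun x hx => ?_, hT.1.2⟩
              have := hT.1.1 hx
              simp only [mem_Icc] at this ⊢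
              have : x ≠ m + 1 := fun h => hT.2 (h ▸ hx)
              have := mem_Icc.mp (hT.1.1 hx)
              omega
            calc _ ≤ _ := card_le_card hsub
              _ ≤ (m + 1 - (j+1)).choose (j+1) := ih m (by omega) (j+1)
              _ = (m - j).choose (j+1) := by congr 1; omega
          -- bound part with m+1
          have h1 : (P.filter (fun T => m + 1 ∈ T)).card ≤ (m - j).choose j := by
            have hinj : (P.filter (fun T => m + 1 ∈ T)).card ≤
                ((((Finset.Icc 1 (m-1)).powerset).filter
                  (fun T => T.card = j ∧ ∀ x ∈ T, x + 1 ∉ T))).card := by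
              apply Finset.card_le_card_of_injOn (fun T => T.erase (m+1))
              · intro T hT
                simp only [hP, mem_coe, mem_filter, mem_powerset] at hT ⊢
                obtain ⟨⟨hTsub, hTcard, hTsp⟩, hTm⟩ := hT
                refine ⟨?_, ?_, ?_⟩
                · intro x hx
                  have hx' := Finset.mem_of_mem_erase hx
                  have hxne := Finset.ne_of_mem_erase hx
                  have hxr := mem_Icc.mp (hTsub hx')
                  have hxm : x ≠ m := by
                    intro h
                    exact hTsp x hx' (by rw [h]; exact hTm)
                  simp only [mem_Icc]; omega
                · rw [Finset.card_erase_of_mem hTm, hTcard]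
                  omega
                · intro x hx
                  intro hc
                  exact hTsp x (Finset.mem_of_mem_erase hx) (Finset.mem_of_mem_erase hc)
              · intro T1 hT1 T2 hT2 h
                simp only [coe_filter, Set.mem_setOf_eq] at hT1 hT2
                have h' : T1.erase (m+1) = T2.erase (m+1) := h
                rw [← Finset.insert_erase hT1.2, ← Finset.insert_erase hT2.2, h']
            calc _ ≤ _ := hinj
              _ ≤ (m - 1 + 1 - j).choose j := ih (m-1) (by omega) j
              _ ≤ (m - j).choose j := by
                  rcases Nat.eq_zero_or_pos m with hm | hm
                  · subst hm
                    interval_cases j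
                    simp
                  · have he : m - 1 + 1 - j = m - j := by omega
                    rw [he]
          have hpascal : (m + 1 + 1 - (j + 1)).choose (j + 1)
              = (m - j).choose j + (m - j).choose (j+1) := by
            have : m + 1 + 1 - (j + 1) = (m - j) + 1 := by omega
            rw [this, Nat.choose_succ_succ]
          omega
        · -- j > m : P is empty
          have : P = ∅ := by
            apply Finset.eq_empty_of_forall_notMem
            intro T hT
            simp only [hP, mem_filter, mem_powerset] at hT
            have h1 := Finset.card_le_card hT.1
            rw [Nat.card_Icc] at h1
            omega
          rw [this]; simp

def rot (n a x : ℕ) : ℕ := (x + n - a) % n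

lemma rot_eq {n a x : ℕ} (ha1 : 1 ≤ a) (han : a ≤ n) (hxn : x ≤ n) :
    rot n a x = if a ≤ x then x - a else x + n - a := by
  unfold rot
  split_ifs with h
  · have he : x + n - a = (x - a) + n := by omega
    rw [he, Nat.add_mod_right, Nat.mod_eq_of_lt (by omega)]
  · rw [Nat.mod_eq_of_lt (by omega)]

lemma rot_inj {n a x y : ℕ} (ha1 : 1 ≤ a) (han : a ≤ n)
    (hx1 : 1 ≤ x) (hxn : x ≤ n) (hy1 : 1 ≤ y) (hyn : y ≤ n)
    (h : rot n a x = rot n a y) : x = y := by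
  rw [rot_eq ha1 han hxn, rot_eq ha1 han hyn] at h
  split_ifs at h <;> omega

lemma rot_self {n a : ℕ} (ha1 : 1 ≤ a) (han : a ≤ n) : rot n a a = 0 := by
  rw [rot_eq ha1 han han]; simp

lemma rot_not_succ {n a : ℕ} {S : Finset ℕ} (hS : Stable n S) (hsub : S ⊆ Finset.Icc 1 n)
    (ha1 : 1 ≤ a) (han : a ≤ n) {x y : ℕ} (hx : x ∈ S) (hy : y ∈ S) :
    rot n a y ≠ rot n a x + 1 := by
  intro h
  have hx' := mem_Icc.mp (hsub hx)
  have hy' := mem_Icc.mp (hsub hy)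
  rw [rot_eq ha1 han hx'.2, rot_eq ha1 han hy'.2] at h
  have hd : y = x + 1 ∨ (x = n ∧ y = 1) := by split_ifs at h <;> omega
  rcases hd with hd | ⟨h1, h2⟩
  · exact hS.1 x hx (hd ▸ hy)
  · exact hS.2 ⟨h2 ▸ hy, h1 ▸ hx⟩

lemma rot_ne_top {n a x : ℕ} {S : Finset ℕ} (hn : 2 ≤ n) (hS : Stable n S)
    (hsub : S ⊆ Finset.Icc 1 n) (ha : a ∈ S) (hx : x ∈ S) :
    rot n a x ≠ n - 1 := by
  intro h
  have hx' := mem_Icc.mp (hsub hx)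
  have ha' := mem_Icc.mp (hsub ha)
  rw [rot_eq ha'.1 ha'.2 hx'.2] at h
  have hd : a = x + 1 ∨ (x = n ∧ a = 1) := by split_ifs at h <;> omega
  rcases hd with hd | ⟨h1, h2⟩
  · exact hS.1 x hx (hd ▸ ha)
  · exact hS.2 ⟨h2 ▸ ha, h1 ▸ hx⟩

lemma rot_bounds {n a x : ℕ} {S : Finset ℕ} (hn : 2 ≤ n) (hS : Stable n S)
    (hsub : S ⊆ Finset.Icc 1 n) (ha : a ∈ S) (hx : x ∈ S) (hxa : x ≠ a) :
    2 ≤ rot n a x ∧ rot n a x ≤ n - 2 := by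
  have hx' := mem_Icc.mp (hsub hx)
  have ha' := mem_Icc.mp (hsub ha)
  have h0 : rot n a x ≠ 0 := by
    intro h
    exact hxa (rot_inj ha'.1 ha'.2 hx'.1 hx'.2 ha'.1 ha'.2
      (by rw [h, rot_self ha'.1 ha'.2]))
  have h1 : rot n a x ≠ 1 := by
    have := rot_not_succ hS hsub ha'.1 ha'.2 ha hx
    rwa [rot_self ha'.1 ha'.2] at this
  have h2 : rot n a x ≤ n - 1 := by
    rw [rot_eq ha'.1 ha'.2 hx'.2]; split_ifs <;> omega
  have h3 := rot_ne_top hn hS hsub ha hx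
  omega

lemma rot_sep {n a b x : ℕ} {S : Finset ℕ} (hn : 2 ≤ n) (hS : Stable n S)
    (hsub : S ⊆ Finset.Icc 1 n) (ha : a ∈ S) (hb : b ∈ S) (hab : a ≠ b)
    (hx : x ∈ S) (hxa : x ≠ a) (hxb : x ≠ b) :
    rot n a x + 1 < rot n a b ∨ rot n a b + 1 < rot n a x := by
  have hx' := mem_Icc.mp (hsub hx)
  have ha' := mem_Icc.mp (hsub ha)
  have hb' := mem_Icc.mp (hsub hb)
  have hbB := rot_bounds hn hS hsub ha hb (Ne.symm hab)
  have hxB := rot_bounds hn hS hsub ha hx hxa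
  have e1 : rot n a x ≠ rot n a b :=
    fun h => hxb (rot_inj ha'.1 ha'.2 hx'.1 hx'.2 hb'.1 hb'.2 h)
  have e2 : rot n a x ≠ rot n a b + 1 := rot_not_succ hS hsub ha'.1 ha'.2 hb hx
  have e3 : rot n a b ≠ rot n a x + 1 := rot_not_succ hS hsub ha'.1 ha'.2 hx hb
  omega

def fmap (n a b x : ℕ) : ℕ :=
  if rot n a x < rot n a b then rot n a x - 1 else rot n a x - 3

lemma fmap_range {n a b x : ℕ} {S : Finset ℕ} (hn : 2 ≤ n) (hS : Stable n S)
    (hsub : S ⊆ Finset.Icc 1 n) (ha : a ∈ S) (hb : b ∈ S) (hab : a ≠ b)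
    (hx : x ∈ S) (hxa : x ≠ a) (hxb : x ≠ b) :
    1 ≤ fmap n a b x ∧ fmap n a b x ≤ n - 5 := by
  have hbB := rot_bounds hn hS hsub ha hb (Ne.symm hab)
  have hxB := rot_bounds hn hS hsub ha hx hxa
  have hsep := rot_sep hn hS hsub ha hb hab hx hxa hxb
  unfold fmap
  set rx := rot n a x
  set rb := rot n a b
  clear_value rx rb
  rcases hsep with hsep | hsep <;> split_ifs <;> omega

lemma fmap_inj {n a b : ℕ} (hn : 2 ≤ n) {S₁ S₂ : Finset ℕ}
    (h1 : Stable n S₁) (hs1 : S₁ ⊆ Finset.Icc 1 n) (ha1 : a ∈ S₁) (hb1 : b ∈ S₁)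
    (h2 : Stable n S₂) (hs2 : S₂ ⊆ Finset.Icc 1 n) (ha2 : a ∈ S₂) (hb2 : b ∈ S₂)
    (hab : a ≠ b) {x y : ℕ} (hx : x ∈ S₁) (hxa : x ≠ a) (hxb : x ≠ b)
    (hy : y ∈ S₂) (hya : y ≠ a) (hyb : y ≠ b)
    (h : fmap n a b x = fmap n a b y) : x = y := by
  have ha' := mem_Icc.mp (hs1 ha1)
  have hx' := mem_Icc.mp (hs1 hx)
  have hy' := mem_Icc.mp (hs2 hy)
  have hxB := rot_bounds hn h1 hs1 ha1 hx hxa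
  have hyB := rot_bounds hn h2 hs2 ha2 hy hya
  have hxS := rot_sep hn h1 hs1 ha1 hb1 hab hx hxa hxb
  have hyS := rot_sep hn h2 hs2 ha2 hb2 hab hy hya hyb
  have hbB := rot_bounds hn h1 hs1 ha1 hb1 (Ne.symm hab)
  have hinj : rot n a x = rot n a y → x = y :=
    rot_inj ha'.1 ha'.2 hx'.1 hx'.2 hy'.1 hy'.2
  unfold fmap at h
  set rx := rot n a x
  set ry := rot n a y
  set rb := rot n a b
  clear_value rx ry rb
  rcases hxS with hxS | hxS <;> rcases hyS with hyS | hyS <;>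
    split_ifs at h <;> exact hinj (by omega)

lemma fmap_not_succ {n a b : ℕ} (hn : 2 ≤ n) {S : Finset ℕ}
    (hS : Stable n S) (hsub : S ⊆ Finset.Icc 1 n) (ha : a ∈ S) (hb : b ∈ S)
    (hab : a ≠ b) {x y : ℕ} (hx : x ∈ S) (hxa : x ≠ a) (hxb : x ≠ b)
    (hy : y ∈ S) (hya : y ≠ a) (hyb : y ≠ b) :
    fmap n a b y ≠ fmap n a b x + 1 := by
  have ha' := mem_Icc.mp (hsub ha)
  have hxB := rot_bounds hn hS hsub ha hx hxa
  have hyB := rot_bounds hn hS hsub ha hy hya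
  have hxS := rot_sep hn hS hsub ha hb hab hx hxa hxb
  have hyS := rot_sep hn hS hsub ha hb hab hy hya hyb
  have hbB := rot_bounds hn hS hsub ha hb (Ne.symm hab)
  have hns := rot_not_succ (a := a) hS hsub ha'.1 ha'.2 hx hy
  intro h
  unfold fmap at h
  set rx := rot n a x
  set ry := rot n a y
  set rb := rot n a b
  clear_value rx ry rb
  rcases hxS with hxS | hxS <;> rcases hyS with hyS | hyS <;>
    split_ifs at h <;> omega


lemma stableSets_mem {n k : ℕ} {S : Finset ℕ} (h : S ∈ stableSets n k) :
    S ⊆ Finset.Icc 1 n ∧ S.card = k ∧ Stable n S := by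
  rw [stableSets, mem_filter, mem_powersetCard] at h
  exact ⟨h.1.1, h.1.2, h.2⟩

lemma sdiff_mem {a b x : ℕ} {S : Finset ℕ} (hx : x ∈ S \ ({a, b} : Finset ℕ)) :
    x ∈ S ∧ x ≠ a ∧ x ≠ b := by
  rw [mem_sdiff, mem_insert, mem_singleton] at hx
  exact ⟨hx.1, fun h => hx.2 (Or.inl h), fun h => hx.2 (Or.inr h)⟩

lemma sdiff_subset_of_image_eq {n a b : ℕ} (hn2 : 2 ≤ n) {S₁ S₂ : Finset ℕ}
    (hst1 : Stable n S₁) (hsub1 : S₁ ⊆ Finset.Icc 1 n) (ha1 : a ∈ S₁) (hb1 : b ∈ S₁)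
    (hst2 : Stable n S₂) (hsub2 : S₂ ⊆ Finset.Icc 1 n) (ha2 : a ∈ S₂) (hb2 : b ∈ S₂)
    (hab : a ≠ b)
    (h : (S₁ \ {a, b}).image (fmap n a b) = (S₂ \ {a, b}).image (fmap n a b)) :
    S₁ \ ({a, b} : Finset ℕ) ⊆ S₂ \ ({a, b} : Finset ℕ) := by
  intro x hx
  obtain ⟨hxS, hxa, hxb⟩ := sdiff_mem hx
  have hmem : fmap n a b x ∈ (S₂ \ {a, b}).image (fmap n a b) := by
    rw [← h]; exact mem_image_of_mem _ hx
  rw [mem_image] at hmem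
  obtain ⟨y, hy, hye⟩ := hmem
  obtain ⟨hyS, hya, hyb⟩ := sdiff_mem hy
  have hxy : y = x := fmap_inj hn2 hst2 hsub2 ha2 hb2 hst1 hsub1 ha1 hb1 hab
    hyS hya hyb hxS hxa hxb hye
  rw [mem_sdiff, mem_insert, mem_singleton]
  exact ⟨hxy ▸ hyS, by tauto⟩

lemma pair_count (n k a b : ℕ) (hk : 2 ≤ k) (hn : 2 * k ≤ n)
    (ha1 : 1 ≤ a) (han : a ≤ n) (hb1 : 1 ≤ b) (hbn : b ≤ n) (hab : a ≠ b) :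
    ((stableSets n k).filter (fun S => a ∈ S ∧ b ∈ S)).card
      ≤ (n - k - 2).choose (k - 2) := by
  have hn2 : 2 ≤ n := by omega
  have key := sparse_count (n - 5) (k - 2)
  have heq : (n - 5 + 1 - (k - 2)).choose (k - 2) = (n - k - 2).choose (k - 2) := by
    rcases eq_or_lt_of_le hk with hk2 | hk3
    · rw [← hk2]; simp
    · have he : n - 5 + 1 - (k - 2) = n - k - 2 := by omega
      rw [he]
  rw [heq] at key
  refine le_trans (Finset.card_le_card_of_injOn
    (fun S => (S \ {a, b}).image (fmap n a b)) ?_ ?_) key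
  · intro S hS
    rw [mem_coe, mem_filter] at hS
    obtain ⟨hSm, haS, hbS⟩ := hS
    obtain ⟨hSsub, hScard, hSst⟩ := stableSets_mem hSm
    rw [mem_coe, mem_filter, mem_powerset]
    refine ⟨?_, ?_, ?_⟩
    · intro t ht
      rw [mem_image] at ht
      obtain ⟨x, hx, rfl⟩ := ht
      obtain ⟨hxS, hxa, hxb⟩ := sdiff_mem hx
      have := fmap_range hn2 hSst hSsub haS hbS hab hxS hxa hxb
      rw [mem_Icc]; exact this
    · have hpair : ({a, b} : Finset ℕ) ⊆ S := by
        intro t ht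
        rw [mem_insert, mem_singleton] at ht
        rcases ht with rfl | rfl
        · exact haS
        · exact hbS
      have hinj : Set.InjOn (fmap n a b) ↑(S \ ({a, b} : Finset ℕ)) := by
        intro x hx y hy hxy
        rw [Finset.mem_coe] at hx hy
        obtain ⟨hxS, hxa, hxb⟩ := sdiff_mem hx
        obtain ⟨hyS, hya, hyb⟩ := sdiff_mem hy
        exact fmap_inj hn2 hSst hSsub haS hbS hSst hSsub haS hbS hab
          hxS hxa hxb hyS hya hyb hxy
      rw [Finset.card_image_of_injOn hinj, card_sdiff_of_subset hpair, hScard, card_pair hab]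
    · intro t ht hc
      rw [mem_image] at ht hc
      obtain ⟨x, hx, hxe⟩ := ht
      obtain ⟨y, hy, hye⟩ := hc
      obtain ⟨hxS, hxa, hxb⟩ := sdiff_mem hx
      obtain ⟨hyS, hya, hyb⟩ := sdiff_mem hy
      exact fmap_not_succ hn2 hSst hSsub haS hbS hab hxS hxa hxb hyS hya hyb
        (by rw [hye, hxe])
  · intro S₁ hS₁ S₂ hS₂ h
    simp only [coe_filter, Set.mem_setOf_eq] at hS₁ hS₂
    obtain ⟨hm1, ha1', hb1'⟩ := hS₁
    obtain ⟨hm2, ha2', hb2'⟩ := hS₂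
    obtain ⟨hsub1, hc1, hst1⟩ := stableSets_mem hm1
    obtain ⟨hsub2, hc2, hst2⟩ := stableSets_mem hm2
    have hsd : S₁ \ ({a, b} : Finset ℕ) = S₂ \ ({a, b} : Finset ℕ) :=
      Finset.Subset.antisymm
        (sdiff_subset_of_image_eq hn2 hst1 hsub1 ha1' hb1' hst2 hsub2 ha2' hb2' hab h)
        (sdiff_subset_of_image_eq hn2 hst2 hsub2 ha2' hb2' hst1 hsub1 ha1' hb1' hab h.symm)
    ext z
    by_cases hza : z = a
    · subst hza; exact iff_of_true ha1' ha2'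
    by_cases hzb : z = b
    · subst hzb; exact iff_of_true hb1' hb2'
    have hz : z ∈ S₁ \ ({a, b} : Finset ℕ) ↔ z ∈ S₂ \ ({a, b} : Finset ℕ) := by rw [hsd]
    rw [mem_sdiff, mem_sdiff, mem_insert, mem_singleton] at hz
    constructor
    · intro h1
      exact (hz.mp ⟨h1, by tauto⟩).1
    · intro h1
      exact (hz.mpr ⟨h1, by tauto⟩).1

end StmtAux

theorem stmt_6 (n k : ℕ) (hk : 2 ≤ k) (hn : 2 * k ≤ n) (F : Finset (Finset ℕ))
    (hF : F ⊆ stableSets n k) (γ : ℝ) (hγ0 : 0 < γ) (hγ1 : γ ≤ 1)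
    (hpop : ∀ j ∈ Finset.Icc 1 n, ((F.filter (fun A => j ∈ A)).card : ℝ) ≤ γ * F.card)
    (F' : Finset (Finset ℕ)) (hF' : F' ⊆ F)
    (hsize : γ * F.card + k ^ 2 * Nat.choose (n - k - 2) (k - 2) ≤ (F'.card : ℝ)) :
    ∃ A ∈ F', ∃ B ∈ F', A ≠ B ∧ Disjoint A B := by
  by_contra hcon
  push_neg at hcon
  -- abbreviation for the binomial coefficient
  set c : ℕ := (n - k - 2).choose (k - 2) with hc
  have hcpos : 1 ≤ c := Nat.succ_le_of_lt (Nat.choose_pos (by omega))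
  have hkc : (1 : ℝ) ≤ (k : ℝ) ^ 2 * (c : ℝ) := by
    have h1 : (1 : ℕ) ≤ k ^ 2 * c := Nat.one_le_iff_ne_zero.mpr (by positivity)
    exact_mod_cast h1
  have hγF : (0 : ℝ) ≤ γ * F.card := by positivity
  -- F' is nonempty
  have hF'pos : 0 < F'.card := by
    by_contra hF0
    push_neg at hF0
    interval_cases h : F'.card
    push_cast at hsize
    linarith
  obtain ⟨A, hA⟩ := Finset.card_pos.mp hF'pos
  obtain ⟨hAsub, hAcard, hAst⟩ := StmtAux.stableSets_mem (hF (hF' hA))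
  -- for each a ∈ A there is a set in F' avoiding a
  have hstar0 : ∀ a ∈ A, ∃ B ∈ F', a ∉ B := by
    intro a ha
    by_contra hall
    push_neg at hall
    have hsub : F' ⊆ F.filter (fun S => a ∈ S) := by
      intro S hS
      exact mem_filter.mpr ⟨hF' hS, hall S hS⟩
    have h1 : (F'.card : ℝ) ≤ γ * F.card := by
      refine le_trans ?_ (hpop a (hAsub ha))
      exact_mod_cast Finset.card_le_card hsub
    linarith
  have hstar : ∀ a : ℕ, ∃ B : Finset ℕ, a ∈ A → B ∈ F' ∧ a ∉ B := by
    intro a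
    by_cases ha : a ∈ A
    · obtain ⟨B, hB1, hB2⟩ := hstar0 a ha
      exact ⟨B, fun _ => ⟨hB1, hB2⟩⟩
    · exact ⟨∅, fun h => absurd h ha⟩
  choose B hB using hstar
  -- F' is covered by the pair filters
  have hcover : F' ⊆ A.biUnion (fun a => (B a).biUnion
      (fun b => (stableSets n k).filter (fun S => a ∈ S ∧ b ∈ S))) := by
    intro S hS
    have hane : ∃ x, x ∈ S ∧ x ∈ A := by
      by_cases hSA : S = A
      · obtain ⟨x, hx⟩ := Finset.card_pos.mp (by rw [hAcard]; omega : 0 < A.card)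
        exact ⟨x, hSA ▸ hx, hx⟩
      · exact Finset.not_disjoint_iff.mp (hcon S hS A hA hSA)
    obtain ⟨a, haS, haA⟩ := hane
    obtain ⟨hBF', haB⟩ := hB a haA
    have hSB : S ≠ B a := fun h => haB (h ▸ haS)
    obtain ⟨b, hbS, hbB⟩ := Finset.not_disjoint_iff.mp (hcon S hS (B a) hBF' hSB)
    rw [Finset.mem_biUnion]
    refine ⟨a, haA, ?_⟩
    rw [Finset.mem_biUnion]
    exact ⟨b, hbB, mem_filter.mpr ⟨hF (hF' hS), haS, hbS⟩⟩
  -- count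
  have hcard : F'.card ≤ k * (k * c) := by
    calc F'.card ≤ _ := Finset.card_le_card hcover
      _ ≤ ∑ a ∈ A, ((B a).biUnion
          (fun b => (stableSets n k).filter (fun S => a ∈ S ∧ b ∈ S))).card :=
        Finset.card_biUnion_le
      _ ≤ ∑ a ∈ A, k * c := by
        refine Finset.sum_le_sum ?_
        intro a haA
        obtain ⟨hBF', haB⟩ := hB a haA
        obtain ⟨hBsub, hBcard, hBst⟩ := StmtAux.stableSets_mem (hF (hF' hBF'))
        calc _ ≤ ∑ b ∈ B a, ((stableSets n k).filter (fun S => a ∈ S ∧ b ∈ S)).card :=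
            Finset.card_biUnion_le
          _ ≤ ∑ b ∈ B a, c := by
            refine Finset.sum_le_sum ?_
            intro b hbB
            have haI := Finset.mem_Icc.mp (hAsub haA)
            have hbI := Finset.mem_Icc.mp (hBsub hbB)
            have hab : a ≠ b := fun h => haB (h ▸ hbB)
            exact StmtAux.pair_count n k a b hk hn haI.1 haI.2 hbI.1 hbI.2 hab
          _ = k * c := by rw [Finset.sum_const, hBcard, smul_eq_mul]
      _ = k * (k * c) := by rw [Finset.sum_const, hAcard, smul_eq_mul]
  have hcardR : (F'.card : ℝ) ≤ (k : ℝ) ^ 2 * (c : ℝ) := by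
    calc (F'.card : ℝ) ≤ ((k * (k * c) : ℕ) : ℝ) := by exact_mod_cast hcard
      _ = (k : ℝ) ^ 2 * (c : ℝ) := by push_cast; ring
  -- but γ * F.card > 0 since F ≠ ∅
  have hFpos : 0 < F.card := Finset.card_pos.mpr ⟨A, hF' hA⟩
  have hγFpos : (0 : ℝ) < γ * F.card := by
    apply mul_pos hγ0
    exact_mod_cast hFpos
  linarith
end

section
/- For integers k ≥ 2 and n ≥ 2k, let F be a family of stable k-subsets of {1,...,n}, and let A, B ∈ F be disjoint sets. Then the number of sets in F that intersect both A and B is at most k²·C(n-k-2, k-2). Consequently, d(A) + d(B) ≥ |F| − k²·C(n-k-2, k-2), where d(X) denotes the number of members of F disjoint from X. -/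
open Finset

attribute [local instance] Classical.propDecidable

/-! A member of `F` meeting both `A` and `B` contains a pair `a ∈ A`, `b ∈ B`, and there are
`k²` such pairs. For fixed `a ≠ b`, delete `a`, `b` and their neighbours from the cycle and
close the two remaining arcs up into a path on `n - 5` vertices without creating adjacencies.
This sends the stable `k`-sets through `a` and `b` injectively to the stable `(k - 2)`-subsets
of that path, of which there are at most `C(n - k - 2, k - 2)` by Pascal's rule. The bound on
`d(A) + d(B)` follows because every member of `F` misses `A`, misses `B`, or meets both. -/

noncomputable def pathStableSets (m r : ℕ) : Finset (Finset ℕ) :=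
  ((range m).powersetCard r).filter fun S => ∀ x ∈ S, x + 1 ∉ S

lemma card_pathStableSets_le_choose (m r : ℕ) : #(pathStableSets m r) ≤ m.choose r :=
  (card_filter_le _ _).trans (by rw [card_powersetCard, card_range])

lemma pathStableSets_subset_union (m r : ℕ) :
    pathStableSets (m + 2) (r + 1) ⊆
      pathStableSets (m + 1) (r + 1) ∪ (pathStableSets m r).image (insert (m + 1)) := by
  intro S hS
  simp only [pathStableSets, mem_filter, mem_powersetCard, mem_union, mem_image] at hS ⊢
  obtain ⟨⟨hSrange, hcard⟩, hsparse⟩ := hS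
  by_cases hlast : m + 1 ∈ S
  · have hm : m ∉ S := fun h => hsparse m h hlast
    refine Or.inr ⟨S.erase (m + 1), ⟨⟨fun x hx => ?_, ?_⟩, ?_⟩, insert_erase hlast⟩
    · have hxS := mem_of_mem_erase hx
      have hxm2 := mem_range.mp (hSrange hxS)
      have hxm : x ≠ m := ne_of_mem_of_not_mem hxS hm
      have hxm1 := ne_of_mem_erase hx
      rw [mem_range]
      omega
    · rw [card_erase_of_mem hlast, hcard, Nat.add_sub_cancel]
    · exact fun x hx hx1 => hsparse x (mem_of_mem_erase hx) (mem_of_mem_erase hx1)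
  · refine Or.inl ⟨⟨fun x hx => ?_, hcard⟩, hsparse⟩
    have hxm2 := mem_range.mp (hSrange hx)
    have hxm1 : x ≠ m + 1 := ne_of_mem_of_not_mem hx hlast
    rw [mem_range]
    omega

theorem card_pathStableSets_le : ∀ m r : ℕ, #(pathStableSets m r) ≤ (m + 1 - r).choose r
  | m, 0 => by simpa using card_pathStableSets_le_choose m 0
  | 0, r + 1 => by simpa using card_pathStableSets_le_choose 0 (r + 1)
  | 1, r + 1 => (card_pathStableSets_le_choose 1 (r + 1)).trans <| by
      cases r <;> simp [Nat.choose_eq_zero_of_lt]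
  | m + 2, r + 1 => by
    calc #(pathStableSets (m + 2) (r + 1))
        ≤ #(pathStableSets (m + 1) (r + 1)) + #(pathStableSets m r) :=
          (card_le_card (pathStableSets_subset_union m r)).trans
            ((card_union_le _ _).trans (Nat.add_le_add_left card_image_le _))
      _ ≤ (m + 1 + 1 - (r + 1)).choose (r + 1) + (m + 1 - r).choose r :=
          Nat.add_le_add (card_pathStableSets_le (m + 1) (r + 1)) (card_pathStableSets_le m r)
      _ ≤ (m + 2 + 1 - (r + 1)).choose (r + 1) := by
          rw [show m + 1 + 1 - (r + 1) = m + 1 - r by omega]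
          by_cases hr : r ≤ m + 1
          · rw [show m + 2 + 1 - (r + 1) = m + 1 - r + 1 by omega, Nat.choose_succ_succ',
              add_comm]
          · rw [show m + 1 - r = 0 by omega, Nat.choose_eq_zero_of_lt (by omega : 0 < r + 1),
              Nat.choose_eq_zero_of_lt (by omega : 0 < r)]
            exact Nat.zero_le _

/-- The position of `y` on the cycle `1, …, n` counted clockwise from `a`, in `[0, n)`. -/
def cyclicOffset (n a y : ℕ) : ℕ := if a ≤ y then y - a else y + n - a

/-- Deleting `a`, `b` and their neighbours from the cycle leaves the arcs of offsets
`[2, d - 2]` and `[d + 2, n - 2]`, where `d` is the offset of `b`; shifting the first down by `2`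
and the second by `4` joins them into one path inside `[0, n - 6]` without creating
adjacencies. -/
def pinch (n a b y : ℕ) : ℕ :=
  if cyclicOffset n a y < cyclicOffset n a b then cyclicOffset n a y - 2
  else cyclicOffset n a y - 4

noncomputable def pinchDomain (n a b : ℕ) : Finset ℕ :=
  (Icc 1 n).filter fun y => cyclicOffset n a y ∈ Icc 2 (n - 2) ∧
    (cyclicOffset n a y + 2 ≤ cyclicOffset n a b ∨
      cyclicOffset n a b + 2 ≤ cyclicOffset n a y)

section Cycle

variable {n a b : ℕ} {C : Finset ℕ}

lemma cyclicOffset_injOn (ha : a ≤ n) : Set.InjOn (cyclicOffset n a) (Icc 1 n) := by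
  intro x hx y hy h
  simp only [coe_Icc, Set.mem_Icc] at hx hy
  unfold cyclicOffset at h
  split_ifs at h <;> omega

lemma Stable.cyclicOffset_ne_succ (hS : Stable n C) (hC : C ⊆ Icc 1 n) (ha : a ≤ n)
    {x y : ℕ} (hx : x ∈ C) (hy : y ∈ C) : cyclicOffset n a y ≠ cyclicOffset n a x + 1 := by
  have hx' := mem_Icc.mp (hC hx)
  have hy' := mem_Icc.mp (hC hy)
  have hsucc : x + 1 ≠ y := fun h => hS.1 x hx (h ▸ hy)
  have hwrap : ¬(y = 1 ∧ x = n) := fun h => hS.2 ⟨h.1 ▸ hy, h.2 ▸ hx⟩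
  unfold cyclicOffset
  split_ifs <;> omega

lemma Stable.cyclicOffset_mem_Icc (hS : Stable n C) (hC : C ⊆ Icc 1 n) {y : ℕ}
    (ha : a ∈ C) (hy : y ∈ C) (hya : y ≠ a) : cyclicOffset n a y ∈ Icc 2 (n - 2) := by
  have ha' := mem_Icc.mp (hC ha)
  have hy' := mem_Icc.mp (hC hy)
  have hya_succ : y + 1 ≠ a := fun h => hS.1 y hy (h ▸ ha)
  have hay_succ : a + 1 ≠ y := fun h => hS.1 a ha (h ▸ hy)
  have hya_wrap : ¬(a = 1 ∧ y = n) := fun h => hS.2 ⟨h.1 ▸ ha, h.2 ▸ hy⟩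
  have hay_wrap : ¬(y = 1 ∧ a = n) := fun h => hS.2 ⟨h.1 ▸ hy, h.2 ▸ ha⟩
  rw [mem_Icc]
  unfold cyclicOffset
  split_ifs <;> omega

lemma Stable.sdiff_subset_pinchDomain (hS : Stable n C) (hC : C ⊆ Icc 1 n) (ha : a ∈ C)
    (hb : b ∈ C) : C \ {a, b} ⊆ pinchDomain n a b := by
  intro y hy
  simp only [mem_sdiff, mem_insert, mem_singleton, not_or] at hy
  obtain ⟨hyC, hya, hyb⟩ := hy
  have han : a ≤ n := (mem_Icc.mp (hC ha)).2
  have hne : cyclicOffset n a y ≠ cyclicOffset n a b := fun h =>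
    hyb (cyclicOffset_injOn han (coe_subset.mpr hC hyC) (coe_subset.mpr hC hb) h)
  have hby := hS.cyclicOffset_ne_succ hC han hb hyC
  have hyb' := hS.cyclicOffset_ne_succ hC han hyC hb
  refine mem_filter.mpr ⟨hC hyC, hS.cyclicOffset_mem_Icc hC ha hyC hya, ?_⟩
  omega

lemma pinch_injOn (ha : a ≤ n) (hb : cyclicOffset n a b ∈ Icc 2 (n - 2)) :
    Set.InjOn (pinch n a b) (pinchDomain n a b) := by
  intro x hx y hy h
  simp only [pinchDomain, coe_filter, Set.mem_ofPred_eq, mem_Icc] at hx hy hb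
  refine cyclicOffset_injOn ha (by simpa using hx.1) (by simpa using hy.1) ?_
  unfold pinch at h
  split_ifs at h <;> omega

lemma pinch_lt (hb : cyclicOffset n a b ∈ Icc 2 (n - 2)) {y : ℕ}
    (hy : y ∈ pinchDomain n a b) : pinch n a b y < n - 5 := by
  simp only [pinchDomain, mem_filter, mem_Icc] at hy hb
  unfold pinch
  split_ifs <;> omega

lemma pinch_ne_succ (hb : cyclicOffset n a b ∈ Icc 2 (n - 2)) {x y : ℕ}
    (hx : x ∈ pinchDomain n a b) (hy : y ∈ pinchDomain n a b)
    (hxy : cyclicOffset n a y ≠ cyclicOffset n a x + 1) :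
    pinch n a b y ≠ pinch n a b x + 1 := by
  simp only [pinchDomain, mem_filter, mem_Icc] at hx hy hb
  unfold pinch
  split_ifs <;> omega

end Cycle

lemma mem_stableSets {n k : ℕ} {C : Finset ℕ} :
    C ∈ stableSets n k ↔ (C ⊆ Icc 1 n ∧ #C = k) ∧ Stable n C := by
  rw [stableSets, mem_filter, mem_powersetCard]

lemma image_pinch_mem_pathStableSets {n k a b : ℕ} {C : Finset ℕ} (hCk : C ∈ stableSets n k)
    (ha : a ∈ C) (hb : b ∈ C) (hab : a ≠ b) :
    (C \ {a, b}).image (pinch n a b) ∈ pathStableSets (n - 5) (k - 2) := by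
  obtain ⟨⟨hC, hcard⟩, hS⟩ := mem_stableSets.mp hCk
  have han : a ≤ n := (mem_Icc.mp (hC ha)).2
  have hbd := hS.cyclicOffset_mem_Icc hC ha hb hab.symm
  have hdom := hS.sdiff_subset_pinchDomain hC ha hb
  refine mem_filter.mpr ⟨mem_powersetCard.mpr ⟨?_, ?_⟩, ?_⟩
  · intro z hz
    obtain ⟨y, hy, rfl⟩ := mem_image.mp hz
    exact mem_range.mpr (pinch_lt hbd (hdom hy))
  · rw [card_image_of_injOn ((pinch_injOn han hbd).mono (coe_subset.mpr hdom)),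
      card_sdiff_of_subset (insert_subset ha (singleton_subset_iff.mpr hb)),
      card_pair hab, hcard]
  · simp only [mem_image]
    rintro _ ⟨x, hx, rfl⟩ ⟨y, hy, hxy⟩
    exact pinch_ne_succ hbd (hdom hx) (hdom hy)
      (hS.cyclicOffset_ne_succ hC han (mem_sdiff.mp hx).1 (mem_sdiff.mp hy).1) hxy

theorem card_filter_stableSets_mem_mem_le {n k a b : ℕ} (hkn : k + 2 ≤ n) (hab : a ≠ b) :
    #((stableSets n k).filter fun C => a ∈ C ∧ b ∈ C) ≤ (n - k - 2).choose (k - 2) := by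
  have hinj : Set.InjOn (fun C : Finset ℕ => (C \ {a, b}).image (pinch n a b))
      ↑((stableSets n k).filter fun C => a ∈ C ∧ b ∈ C) := by
    intro C hC C' hC' h
    simp only [coe_filter, Set.mem_ofPred_eq] at hC hC'
    obtain ⟨⟨hCsub, -⟩, hS⟩ := mem_stableSets.mp hC.1
    obtain ⟨⟨hCsub', -⟩, hS'⟩ := mem_stableSets.mp hC'.1
    have hbd := hS.cyclicOffset_mem_Icc hCsub hC.2.1 hC.2.2 hab.symm
    have hsdiff : C \ {a, b} = C' \ {a, b} :=
      image_injOn_powerset_of_injOn (pinch_injOn (mem_Icc.mp (hCsub hC.2.1)).2 hbd)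
        (mem_powerset.mpr (hS.sdiff_subset_pinchDomain hCsub hC.2.1 hC.2.2))
        (mem_powerset.mpr (hS'.sdiff_subset_pinchDomain hCsub' hC'.2.1 hC'.2.2)) h
    rw [← sdiff_union_of_subset (insert_subset hC.2.1 (singleton_subset_iff.mpr hC.2.2)),
      ← sdiff_union_of_subset (insert_subset hC'.2.1 (singleton_subset_iff.mpr hC'.2.2)), hsdiff]
  calc #((stableSets n k).filter fun C => a ∈ C ∧ b ∈ C)
      ≤ #(pathStableSets (n - 5) (k - 2)) :=
        card_le_card_of_injOn _ (fun C hC => by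
          simp only [coe_filter, Set.mem_ofPred_eq] at hC
          exact image_pinch_mem_pathStableSets hC.1 hC.2.1 hC.2.2 hab) hinj
    _ ≤ (n - 5 + 1 - (k - 2)).choose (k - 2) := card_pathStableSets_le _ _
    _ = (n - k - 2).choose (k - 2) := by
        rcases le_or_gt k 2 with hk | hk
        · rw [Nat.sub_eq_zero_of_le hk, Nat.choose_zero_right, Nat.choose_zero_right]
        · rw [show n - 5 + 1 - (k - 2) = n - k - 2 by omega]

lemma card_filter_inter_nonempty_le {α : Type*} [DecidableEq α] (F : Finset (Finset α))
    (A B : Finset α) (m : ℕ)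
    (h : ∀ a ∈ A, ∀ b ∈ B, #(F.filter fun C => a ∈ C ∧ b ∈ C) ≤ m) :
    #(F.filter fun C => (C ∩ A).Nonempty ∧ (C ∩ B).Nonempty) ≤ #A * #B * m := by
  have hcover : (F.filter fun C => (C ∩ A).Nonempty ∧ (C ∩ B).Nonempty) ⊆
      (A ×ˢ B).biUnion fun p => F.filter fun C => p.1 ∈ C ∧ p.2 ∈ C := by
    intro C hC
    obtain ⟨hCF, ⟨a, ha⟩, ⟨b, hb⟩⟩ := mem_filter.mp hC
    rw [mem_inter] at ha hb
    exact mem_biUnion.mpr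
      ⟨(a, b), mem_product.mpr ⟨ha.2, hb.2⟩, mem_filter.mpr ⟨hCF, ha.1, hb.1⟩⟩
  calc _ ≤ _ := card_le_card hcover
    _ ≤ ∑ p ∈ A ×ˢ B, #(F.filter fun C => p.1 ∈ C ∧ p.2 ∈ C) := card_biUnion_le
    _ ≤ ∑ _p ∈ A ×ˢ B, m :=
      sum_le_sum fun p hp => h _ (mem_product.mp hp).1 _ (mem_product.mp hp).2
    _ = #A * #B * m := by rw [sum_const, card_product, smul_eq_mul]

lemma card_le_card_filter_disjoint_add {α : Type*} [DecidableEq α] (F : Finset (Finset α))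
    (A B : Finset α) :
    #F ≤ #(F.filter fun C => Disjoint C A) + #(F.filter fun C => Disjoint C B) +
      #(F.filter fun C => (C ∩ A).Nonempty ∧ (C ∩ B).Nonempty) := by
  have hcover : F ⊆ (F.filter fun C => Disjoint C A) ∪ (F.filter fun C => Disjoint C B) ∪
      (F.filter fun C => (C ∩ A).Nonempty ∧ (C ∩ B).Nonempty) := by
    intro C hC
    simp only [mem_union, mem_filter, ← not_disjoint_iff_nonempty_inter]
    tauto
  exact (card_le_card hcover).trans
    ((card_union_le _ _).trans (Nat.add_le_add_right (card_union_le _ _) _))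

theorem stmt_8 (n k : ℕ) (hk : 2 ≤ k) (hn : 2 * k ≤ n) (F : Finset (Finset ℕ))
    (hF : F ⊆ stableSets n k) (A B : Finset ℕ) (hA : A ∈ F) (hB : B ∈ F)
    (hAB : Disjoint A B) :
    ((F.filter (fun C => (C ∩ A).Nonempty ∧ (C ∩ B).Nonempty)).card
        ≤ k ^ 2 * Nat.choose (n - k - 2) (k - 2)) ∧
    ((F.card : ℝ) - k ^ 2 * Nat.choose (n - k - 2) (k - 2)
        ≤ ((F.filter (fun C => Disjoint C A)).card : ℝ)
          + ((F.filter (fun C => Disjoint C B)).card : ℝ)) := by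
  have hcardA : #A = k := (mem_stableSets.mp (hF hA)).1.2
  have hcardB : #B = k := (mem_stableSets.mp (hF hB)).1.2
  have hpair : ∀ a ∈ A, ∀ b ∈ B,
      #(F.filter fun C => a ∈ C ∧ b ∈ C) ≤ (n - k - 2).choose (k - 2) := fun a ha b hb =>
    (card_le_card (filter_subset_filter _ hF)).trans
      (card_filter_stableSets_mem_mem_le (by omega) fun hab => disjoint_left.mp hAB ha (hab ▸ hb))
  have hmeet := card_filter_inter_nonempty_le F A B _ hpair
  rw [hcardA, hcardB, ← sq] at hmeet
  refine ⟨hmeet, ?_⟩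
  have hcover : (#F : ℝ) ≤
      #(F.filter fun C => Disjoint C A) + #(F.filter fun C => Disjoint C B) +
        #(F.filter fun C => (C ∩ A).Nonempty ∧ (C ∩ B).Nonempty) := by
    exact_mod_cast card_le_card_filter_disjoint_add F A B
  have hmeet' : (#(F.filter fun C => (C ∩ A).Nonempty ∧ (C ∩ B).Nonempty) : ℝ) ≤
      k ^ 2 * (n - k - 2).choose (k - 2) := by
    exact_mod_cast hmeet
  linarith
end

section
/- For integers k ≥ 2 and n ≥ 10k⁴, the number of stable k-subsets of {1,...,n} is at least (80/81)·C(n-k+1, k), and moreover k²·C(n-k-2,k-2) ≤ (1/4)·(1/(2n))·|stable k-subsets of {1,...,n}|. -/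
open Finset

attribute [local instance] Classical.propDecidable

/-! ### The rank-shift injection -/

noncomputable def sh (B : Finset ℕ) (x : ℕ) : ℕ := x + (B.filter (fun y => y < x)).card

lemma sh_lt {B : Finset ℕ} {x y : ℕ} (hx : x ∈ B) (hxy : x < y) :
    sh B x + 2 ≤ sh B y := by
  have hsub : insert x (B.filter (fun z => z < x)) ⊆ B.filter (fun z => z < y) := by
    intro z hz
    rcases Finset.mem_insert.1 hz with rfl | hz
    · exact Finset.mem_filter.2 ⟨hx, hxy⟩
    · rcases Finset.mem_filter.1 hz with ⟨h1, h2⟩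
      exact Finset.mem_filter.2 ⟨h1, h2.trans hxy⟩
  have hnot : x ∉ B.filter (fun z => z < x) := by
    simp
  have hcard := Finset.card_le_card hsub
  rw [Finset.card_insert_of_notMem hnot] at hcard
  unfold sh
  omega

lemma sh_strictMono {B : Finset ℕ} {x y : ℕ} (hx : x ∈ B) (hxy : x < y) :
    sh B x < sh B y := by have := sh_lt hx hxy; omega

lemma sh_injOn (B : Finset ℕ) : Set.InjOn (sh B) ↑B := by
  intro x hx y hy hxy
  by_contra hne
  rcases Nat.lt_or_ge x y with h | h
  · exact absurd hxy (Nat.ne_of_lt (sh_strictMono hx h))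
  · have h' : y < x := lt_of_le_of_ne h (Ne.symm hne)
    exact absurd hxy.symm (Nat.ne_of_lt (sh_strictMono hy h'))

lemma filter_image_sh (B : Finset ℕ) {x : ℕ} (hx : x ∈ B) :
    (B.image (sh B)).filter (fun a => a < sh B x)
      = (B.filter (fun y => y < x)).image (sh B) := by
  ext a
  simp only [Finset.mem_filter, Finset.mem_image]
  constructor
  · rintro ⟨⟨y, hy, rfl⟩, hlt⟩
    refine ⟨y, ⟨hy, ?_⟩, rfl⟩
    by_contra hge
    push_neg at hge
    rcases Nat.eq_or_lt_of_le hge with rfl | h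
    · omega
    · exact absurd hlt (not_lt.2 (le_of_lt (sh_strictMono hx h)))
  · rintro ⟨y, hy, rfl⟩
    exact ⟨⟨y, hy.1, rfl⟩, sh_strictMono hy.1 hy.2⟩

lemma sh_recover (B : Finset ℕ) {x : ℕ} (hx : x ∈ B) :
    ((B.image (sh B)).filter (fun a => a < sh B x)).card
      = (B.filter (fun y => y < x)).card := by
  rw [filter_image_sh B hx]
  exact Finset.card_image_of_injOn ((sh_injOn B).mono (by
    intro z hz; exact (Finset.mem_filter.1 hz).1))

lemma image_sh_inj {B₁ B₂ : Finset ℕ} (h : B₁.image (sh B₁) = B₂.image (sh B₂)) :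
    B₁ = B₂ := by
  have key : ∀ B₁ B₂ : Finset ℕ, B₁.image (sh B₁) = B₂.image (sh B₂) → B₁ ⊆ B₂ := by
    intro C D hCD x hx
    have hxA : sh C x ∈ D.image (sh D) := by
      rw [← hCD]; exact Finset.mem_image_of_mem _ hx
    rcases Finset.mem_image.1 hxA with ⟨y, hy, hxy⟩
    have h1 := sh_recover C hx
    have h2 := sh_recover D hy
    rw [hCD] at h1
    rw [hxy] at h2
    rw [h2] at h1
    have : x = y := by unfold sh at hxy; omega
    rwa [this]
  exact Finset.Subset.antisymm (key _ _ h) (key _ _ h.symm)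

lemma sh_rank_le {B : Finset ℕ} {x : ℕ} (hx : x ∈ B) :
    (B.filter (fun y => y < x)).card + 1 ≤ B.card := by
  have hsub : B.filter (fun y => y < x) ⊆ B.erase x := by
    intro z hz
    rcases Finset.mem_filter.1 hz with ⟨h1, h2⟩
    exact Finset.mem_erase.2 ⟨Nat.ne_of_lt h2, h1⟩
  have := Finset.card_le_card hsub
  have := Finset.card_erase_of_mem hx
  have := Finset.card_pos.2 ⟨x, hx⟩
  omega

noncomputable def dom (n k : ℕ) : Finset (Finset ℕ) :=
  ((Finset.Icc 1 (n - k + 1)).powersetCard k).filter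
    (fun B => ¬(1 ∈ B ∧ (n - k + 1) ∈ B))

lemma image_mem_stable {n k : ℕ} (hk : 2 ≤ k) (hn : 2 * k + 2 ≤ n)
    {B : Finset ℕ} (hB : B ∈ dom n k) : B.image (sh B) ∈ stableSets n k := by
  rcases Finset.mem_filter.1 hB with ⟨hB1, hno⟩
  rcases Finset.mem_powersetCard.1 hB1 with ⟨hsub, hcard⟩
  have hmem : ∀ x ∈ B, 1 ≤ x ∧ x ≤ n - k + 1 := by
    intro x hx; exact Finset.mem_Icc.1 (hsub hx)
  have hrank : ∀ x ∈ B, (B.filter (fun y => y < x)).card + 1 ≤ k := by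
    intro x hx; have := sh_rank_le hx; omega
  refine Finset.mem_filter.2 ⟨Finset.mem_powersetCard.2 ⟨?_, ?_⟩, ?_, ?_⟩
  · intro a ha
    rcases Finset.mem_image.1 ha with ⟨x, hx, rfl⟩
    have h1 := hmem x hx
    have h2 := hrank x hx
    unfold sh
    rw [Finset.mem_Icc]
    omega
  · rw [Finset.card_image_of_injOn (sh_injOn B)]; exact hcard
  · intro a ha hcons
    rcases Finset.mem_image.1 ha with ⟨x, hx, hxe⟩
    rcases Finset.mem_image.1 hcons with ⟨y, hy, hye⟩
    rcases Nat.lt_trichotomy x y with h | rfl | h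
    · have := sh_lt hx h; omega
    · omega
    · have := sh_lt hy h; omega
  · rintro ⟨h1, hn'⟩
    rcases Finset.mem_image.1 h1 with ⟨x, hx, hxe⟩
    rcases Finset.mem_image.1 hn' with ⟨y, hy, hye⟩
    have hx1 := hmem x hx
    have hy1 := hmem y hy
    have hx2 := hrank x hx
    have hy2 := hrank y hy
    unfold sh at hxe hye
    have hxB : x = 1 := by omega
    have hyB : y = n - k + 1 := by omega
    exact hno ⟨hxB ▸ hx, hyB ▸ hy⟩

lemma dom_card_le {n k : ℕ} (hk : 2 ≤ k) (hn : 2 * k + 2 ≤ n) :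
    (dom n k).card ≤ (stableSets n k).card :=
  Finset.card_le_card_of_injOn (fun B => B.image (sh B))
    (fun B hB => image_mem_stable hk hn hB)
    (fun _ _ _ _ h => image_sh_inj h)

lemma bad_card_le {n k : ℕ} (hk : 2 ≤ k) (hn : 2 * k + 2 ≤ n) :
    (((Finset.Icc 1 (n - k + 1)).powersetCard k).filter
      (fun B => (1 ∈ B ∧ (n - k + 1) ∈ B))).card ≤ (n - k - 1).choose (k - 2) := by
  have hN : 3 ≤ n - k + 1 := by omega
  have key : (((Finset.Icc 1 (n - k + 1)).powersetCard k).filter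
      (fun B => (1 ∈ B ∧ (n - k + 1) ∈ B))).card
      ≤ ((Finset.Icc 2 (n - k)).powersetCard (k - 2)).card := by
    apply Finset.card_le_card_of_injOn (fun B => (B.erase 1).erase (n - k + 1))
    · intro B hB
      rcases Finset.mem_filter.1 hB with ⟨hB1, h1, h2⟩
      rcases Finset.mem_powersetCard.1 hB1 with ⟨hsub, hcard⟩
      refine Finset.mem_powersetCard.2 ⟨?_, ?_⟩
      · intro z hz
        rcases Finset.mem_erase.1 hz with ⟨hz1, hz2⟩
        rcases Finset.mem_erase.1 hz2 with ⟨hz3, hz4⟩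
        have := Finset.mem_Icc.1 (hsub hz4)
        rw [Finset.mem_Icc]
        omega
      · have hmem : (n - k + 1) ∈ B.erase 1 := Finset.mem_erase.2 ⟨by omega, h2⟩
        rw [Finset.card_erase_of_mem hmem, Finset.card_erase_of_mem h1, hcard]
        omega
    · intro B₁ hB₁ B₂ hB₂ he
      rcases Finset.mem_filter.1 (Finset.mem_coe.1 hB₁) with ⟨_, h11, h12⟩
      rcases Finset.mem_filter.1 (Finset.mem_coe.1 hB₂) with ⟨_, h21, h22⟩
      have r1 : insert 1 (insert (n - k + 1) ((B₁.erase 1).erase (n - k + 1))) = B₁ := by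
        rw [Finset.insert_erase (Finset.mem_erase.2 ⟨by omega, h12⟩),
          Finset.insert_erase h11]
      have r2 : insert 1 (insert (n - k + 1) ((B₂.erase 1).erase (n - k + 1))) = B₂ := by
        rw [Finset.insert_erase (Finset.mem_erase.2 ⟨by omega, h22⟩),
          Finset.insert_erase h21]
      simp only at he
      rw [← r1, ← r2, he]
  rw [Finset.card_powersetCard, Nat.card_Icc] at key
  have : n - k + 1 - 2 = n - k - 1 := by omega
  rwa [this] at key

lemma count_lower {n k : ℕ} (hk : 2 ≤ k) (hn : 2 * k + 2 ≤ n) :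
    (n - k + 1).choose k ≤ (stableSets n k).card + (n - k - 1).choose (k - 2) := by
  have htot := Finset.card_filter_add_card_filter_not
    (s := (Finset.Icc 1 (n - k + 1)).powersetCard k)
    (p := fun B => (1 ∈ B ∧ (n - k + 1) ∈ B))
  rw [Finset.card_powersetCard, Nat.card_Icc] at htot
  have he : n - k + 1 + 1 - 1 = n - k + 1 := by omega
  rw [he] at htot
  have h1 := bad_card_le hk hn
  have h2 := dom_card_le hk hn
  have hdom : (dom n k).card = (((Finset.Icc 1 (n - k + 1)).powersetCard k).filter
      (fun B => ¬(1 ∈ B ∧ (n - k + 1) ∈ B))).card := rfl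
  omega

/-! ### Binomial identities and numeric estimates -/

lemma choose_id1 (m e : ℕ) :
    (m+2)*((m+1)*(m.choose e)) = ((m+2).choose (e+2))*((e+2)*(e+1)) := by
  have h1 : (m+1) * m.choose e = (m+1).choose (e+1) * (e+1) := Nat.add_one_mul_choose_eq m e
  have h2 : (m+2) * (m+1).choose (e+1) = (m+2).choose (e+2) * (e+2) :=
    Nat.add_one_mul_choose_eq (m+1) (e+1)
  calc (m+2)*((m+1)*m.choose e) = (m+2)*((m+1).choose (e+1)*(e+1)) := by rw [h1]
    _ = ((m+2)*(m+1).choose (e+1))*(e+1) := by ring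
    _ = ((m+2).choose (e+2)*(e+2))*(e+1) := by rw [h2]
    _ = ((m+2).choose (e+2))*((e+2)*(e+1)) := by ring

lemma choose_id2 (d e : ℕ) :
    (d+e+2).choose e * (d + e + 3) = (d+e+3).choose e * (d + 3) := by
  have h := Nat.choose_mul_succ_eq (d+e+2) e
  have h' : d + e + 2 + 1 - e = d + 3 := by omega
  have h'' : d + e + 2 + 1 = d + e + 3 := by omega
  rw [h', h''] at h
  exact h

lemma pow3_ge (e : ℕ) : 8 ≤ (e+2)^3 := by
  calc (8:ℕ) = 2^3 := by norm_num
    _ ≤ (e+2)^3 := Nat.pow_le_pow_left (by omega) 3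

lemma pow80 (e : ℕ) : 80*(e+2) ≤ 10*(e+2)^4 := by
  have h8 := pow3_ge e
  calc 80*(e+2) = (10*(e+2))*8 := by ring
    _ ≤ (10*(e+2))*(e+2)^3 := Nat.mul_le_mul_left _ h8
    _ = 10*(e+2)^4 := by ring

lemma hk80 (d e : ℕ) (h10 : 10*(e+2)^4 ≤ d + 2*e + 6) : 80*(e+2) ≤ d + 2*e + 6 :=
  le_trans (pow80 e) h10

lemma numI1 (d e : ℕ) (h10 : 10*(e+2)^4 ≤ d + 2*e + 6) :
    81*((e+2)*(e+1)) ≤ (d+e+5)*(d+e+4) := by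
  have h := hk80 d e h10
  obtain ⟨t, rfl⟩ : ∃ t, d = 78*e + 154 + t := ⟨d - (78*e+154), by omega⟩
  nlinarith [sq_nonneg e, sq_nonneg t, Nat.zero_le (e*t)]

lemma numI2 (d e : ℕ) (h10 : 10*(e+2)^4 ≤ d + 2*e + 6) :
    648*(d+2*e+6)*((e+2)^3*(e+1))*(d+3) ≤ 80*((d+e+5)*(d+e+4)*(d+e+3)) := by
  have h80 := hk80 d e h10
  have s2 : 648*(d+2*e+6)^2 ≤ 800*((d+e+5)*(d+e+4)) := by
    obtain ⟨t, rfl⟩ : ∃ t, d = 78*e + 154 + t := ⟨d - (78*e+154), by omega⟩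
    nlinarith [sq_nonneg e, sq_nonneg t, Nat.zero_le (e*t)]
  have hX : 10*((e+2)^3*(e+1)) ≤ d + 2*e + 6 := by
    refine le_trans ?_ h10
    calc 10*((e+2)^3*(e+1)) ≤ 10*((e+2)^3*(e+2)) :=
          Nat.mul_le_mul_left _ (Nat.mul_le_mul_left _ (by omega))
      _ = 10*(e+2)^4 := by ring
  have chain : 10*(648*(d+2*e+6)*((e+2)^3*(e+1))*(d+3))
      ≤ 10*(80*((d+e+5)*(d+e+4)*(d+e+3))) := by
    calc 10*(648*(d+2*e+6)*((e+2)^3*(e+1))*(d+3))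
        = (648*(d+2*e+6)*(d+3))*(10*((e+2)^3*(e+1))) := by ring
      _ ≤ (648*(d+2*e+6)*(d+3))*(d+2*e+6) := Nat.mul_le_mul_left _ hX
      _ = (648*(d+2*e+6)^2)*(d+3) := by ring
      _ ≤ (800*((d+e+5)*(d+e+4)))*(d+3) := Nat.mul_le_mul_right _ s2
      _ ≤ (800*((d+e+5)*(d+e+4)))*(d+e+3) := Nat.mul_le_mul_left _ (by omega)
      _ = 10*(80*((d+e+5)*(d+e+4)*(d+e+3))) := by ring
  omega

set_option maxHeartbeats 1600000 in
theorem stmt_9 (n k : ℕ) (hk : 2 ≤ k) (hn : 10 * k ^ 4 ≤ n) :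
    ((80 : ℝ) / 81) * (Nat.choose (n - k + 1) k : ℝ) ≤ ((stableSets n k).card : ℝ) ∧
    (k ^ 2 * Nat.choose (n - k - 2) (k - 2) : ℝ)
      ≤ (1 / 4) * (1 / (2 * n)) * ((stableSets n k).card : ℝ) := by
  obtain ⟨e, rfl⟩ : ∃ e, k = e + 2 := ⟨k - 2, by omega⟩
  have hn2 : 2 * (e + 2) + 2 ≤ n := by
    refine le_trans (le_trans (by omega) (pow80 e)) hn
  obtain ⟨d, rfl⟩ : ∃ d, n = d + 2 * e + 6 := ⟨n - (2 * e + 6), by omega⟩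
  have h10 : 10*(e+2)^4 ≤ d + 2*e + 6 := hn
  -- rewrite the truncated subtractions
  have r1 : d + 2 * e + 6 - (e + 2) + 1 = d + e + 5 := by omega
  have r2 : d + 2 * e + 6 - (e + 2) - 2 = d + e + 2 := by omega
  have r3 : e + 2 - 2 = e := by omega
  have r4 : d + 2 * e + 6 - (e + 2) - 1 = d + e + 3 := by omega
  rw [r1, r2, r3]
  -- notation
  set S : ℕ := (stableSets (d + 2 * e + 6) (e + 2)).card with hS
  -- counting bound
  have hcount : (d+e+5).choose (e+2) ≤ S + (d+e+3).choose e := by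
    have := count_lower (n := d + 2*e + 6) (k := e+2) (by omega) (by omega)
    rwa [r1, r4, r3] at this
  -- identities
  have id1 : (d+e+5)*((d+e+4)*((d+e+3).choose e))
      = ((d+e+5).choose (e+2))*((e+2)*(e+1)) := choose_id1 (d+e+3) e
  have id2 : (d+e+2).choose e * (d+e+3) = (d+e+3).choose e * (d+3) := choose_id2 d e
  -- 81 * b ≤ c
  have h81 : 81 * (d+e+3).choose e ≤ (d+e+5).choose (e+2) := by
    have hpos : 0 < (d+e+5)*(d+e+4) := by positivity
    have hmul : ((d+e+5)*(d+e+4)) * (81 * (d+e+3).choose e)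
        ≤ ((d+e+5)*(d+e+4)) * ((d+e+5).choose (e+2)) := by
      calc ((d+e+5)*(d+e+4)) * (81 * (d+e+3).choose e)
          = 81 * ((d+e+5)*((d+e+4)*((d+e+3).choose e))) := by ring
        _ = 81 * (((d+e+5).choose (e+2))*((e+2)*(e+1))) := by rw [id1]
        _ = (81*((e+2)*(e+1))) * ((d+e+5).choose (e+2)) := by ring
        _ ≤ ((d+e+5)*(d+e+4)) * ((d+e+5).choose (e+2)) :=
            Nat.mul_le_mul_right _ (numI1 d e h10)
    exact Nat.le_of_mul_le_mul_left hmul hpos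
  -- real versions
  have hcountR : ((d+e+5).choose (e+2) : ℝ) ≤ (S : ℝ) + ((d+e+3).choose e : ℝ) := by
    exact_mod_cast hcount
  have h81R : 81 * ((d+e+3).choose e : ℝ) ≤ ((d+e+5).choose (e+2) : ℝ) := by
    exact_mod_cast h81
  have hSc : (80:ℝ)/81 * ((d+e+5).choose (e+2) : ℝ) ≤ (S : ℝ) := by linarith
  refine ⟨hSc, ?_⟩
  -- second part
  have id1R : ((d+e+5):ℝ)*((d+e+4)*((d+e+3).choose e : ℝ))
      = ((d+e+5).choose (e+2) : ℝ)*((e+2)*(e+1)) := by exact_mod_cast id1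
  have id2R : ((d+e+2).choose e : ℝ) * (d+e+3) = ((d+e+3).choose e : ℝ) * (d+3) := by
    exact_mod_cast id2
  have numI2R : (648:ℝ)*(d+2*e+6)*((e+2)^3*(e+1))*(d+3)
      ≤ 80*((d+e+5)*(d+e+4)*(d+e+3)) := by exact_mod_cast numI2 d e h10
  set a : ℝ := ((d+e+2).choose e : ℝ) with ha
  set b : ℝ := ((d+e+3).choose e : ℝ) with hb
  set c : ℝ := ((d+e+5).choose (e+2) : ℝ) with hc
  have hcnn : (0:ℝ) ≤ c := by positivity
  have hQ : (0:ℝ) < ((d:ℝ)+e+3)*(((d:ℝ)+e+5)*((d:ℝ)+e+4)) := by positivity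
  have key : (648*((d:ℝ)+2*e+6)*((e:ℝ)+2)^2*a) * (((d:ℝ)+e+3)*(((d:ℝ)+e+5)*((d:ℝ)+e+4)))
      ≤ (80*c) * (((d:ℝ)+e+3)*(((d:ℝ)+e+5)*((d:ℝ)+e+4))) := by
    have e1 : (648*((d:ℝ)+2*e+6)*((e:ℝ)+2)^2*a) * (((d:ℝ)+e+3)*(((d:ℝ)+e+5)*((d:ℝ)+e+4)))
        = (648*((d:ℝ)+2*e+6)*(((e:ℝ)+2)^3*((e:ℝ)+1))*((d:ℝ)+3)) * c := by
      linear_combination (648*((d:ℝ)+2*e+6)*((e:ℝ)+2)^2*(((d:ℝ)+e+5)*((d:ℝ)+e+4))) * id2R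
        + (648*((d:ℝ)+2*e+6)*((e:ℝ)+2)^2*((d:ℝ)+3)) * id1R
    have e2 : (648*((d:ℝ)+2*e+6)*(((e:ℝ)+2)^3*((e:ℝ)+1))*((d:ℝ)+3)) * c
        ≤ (80*(((d:ℝ)+e+5)*((d:ℝ)+e+4)*((d:ℝ)+e+3))) * c :=
      mul_le_mul_of_nonneg_right numI2R hcnn
    calc (648*((d:ℝ)+2*e+6)*((e:ℝ)+2)^2*a) * (((d:ℝ)+e+3)*(((d:ℝ)+e+5)*((d:ℝ)+e+4)))
        = (648*((d:ℝ)+2*e+6)*(((e:ℝ)+2)^3*((e:ℝ)+1))*((d:ℝ)+3)) * c := e1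
      _ ≤ (80*(((d:ℝ)+e+5)*((d:ℝ)+e+4)*((d:ℝ)+e+3))) * c := e2
      _ = (80*c) * (((d:ℝ)+e+3)*(((d:ℝ)+e+5)*((d:ℝ)+e+4))) := by ring
  have hc648 : 648*((d:ℝ)+2*e+6)*((e:ℝ)+2)^2*a ≤ 80*c :=
    le_of_mul_le_mul_right key hQ
  -- conclude
  have hnpos : (0:ℝ) < ((d:ℝ)+2*e+6) := by positivity
  have goal8 : 8*((d:ℝ)+2*e+6)*(((e:ℝ)+2)^2*a) ≤ (S:ℝ) := by linarith [hc648, hSc]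
  have hG2 : (((e:ℝ)+2)^2 * a) ≤ 1/4 * (1/(2*((d:ℝ)+2*e+6))) * (S:ℝ) := by
    have key2 : (1:ℝ)/4*(1/(2*((d:ℝ)+2*e+6)))*(S:ℝ) - (((e:ℝ)+2)^2*a)
        = ((S:ℝ) - 8*((d:ℝ)+2*e+6)*(((e:ℝ)+2)^2*a)) / (8*((d:ℝ)+2*e+6)) := by
      field_simp
      ring
    have hnn : (0:ℝ) ≤ ((S:ℝ) - 8*((d:ℝ)+2*e+6)*(((e:ℝ)+2)^2*a)) / (8*((d:ℝ)+2*e+6)) :=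
      div_nonneg (by linarith) (by positivity)
    rw [← key2] at hnn
    linarith
  push_cast
  push_cast [ha] at hG2
  linarith [hG2]
end

section
/- For integers k ≥ 2 and n ≥ 2k, let X ⊆ {1,...,n}, let F be a family of X-stable k-subsets of X, let γ ∈ (0,1], and let j ∈ X be an element belonging to at least γ·|F| sets of F. Then for every k-subset A of {1,...,n} with j ∉ A, the number of sets in F disjoint from A is at least γ·|F| − k·C(|X|-k-2, k-2). -/
open Finset

attribute [local instance] Classical.propDecidable

/-- `a` and `b` are cyclically adjacent in the cycle on `X` ordered increasingly. -/
def CyclAdj (X : Finset ℕ) (a b : ℕ) : Prop :=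
  a ≠ b ∧ ((∀ c ∈ X, ¬(min a b < c ∧ c < max a b)) ∨ (∀ c ∈ X, min a b ≤ c ∧ c ≤ max a b))

/-- `A` is an `X`-stable subset: an independent set in the cycle on `X`. -/
def XStable (X A : Finset ℕ) : Prop :=
  A ⊆ X ∧ ∀ a ∈ A, ∀ b ∈ A, ¬ CyclAdj X a b

/-- The collection of `X`-stable `k`-subsets of `X`. -/
noncomputable def xStableSets (X : Finset ℕ) (k : ℕ) : Finset (Finset ℕ) :=
  (X.powersetCard k).filter (fun A => XStable X A)

namespace Stmt11Aux

/-! ### Pure combinatorics on "no two consecutive" subsets of ℕ -/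

lemma double_bound (C : Finset ℕ) (hcc : ∀ y ∈ C, y + 1 ∉ C) (a b : ℕ) (hb : b ∈ C) :
    2 * (C.filter (fun y => a ≤ y ∧ y < b)).card ≤ b - a := by
  classical
  set D := C.filter (fun y => a ≤ y ∧ y < b) with hD
  have hmemD : ∀ y, y ∈ D ↔ y ∈ C ∧ a ≤ y ∧ y < b := fun y => by
    simp [hD]
  have hsub : D ∪ D.image (fun y => y + 1) ⊆ Finset.Ico a b := by
    intro z hz
    rcases Finset.mem_union.1 hz with hz | hz
    · rcases (hmemD z).1 hz with ⟨_, h1, h2⟩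
      exact Finset.mem_Ico.2 ⟨h1, h2⟩
    · rcases Finset.mem_image.1 hz with ⟨y, hy, rfl⟩
      rcases (hmemD y).1 hy with ⟨hyC, h1, h2⟩
      have hne : y + 1 ≠ b := fun h => hcc y hyC (h ▸ hb)
      exact Finset.mem_Ico.2 ⟨by omega, by omega⟩
  have hdisj : Disjoint D (D.image (fun y => y + 1)) := by
    rw [Finset.disjoint_right]
    intro z hz hz'
    rcases Finset.mem_image.1 hz with ⟨y, hy, rfl⟩
    exact hcc y ((hmemD y).1 hy).1 ((hmemD (y + 1)).1 hz').1
  have hcard := Finset.card_le_card hsub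
  rw [Finset.card_union_of_disjoint hdisj,
    Finset.card_image_of_injective _
      (fun a b h => by simpa using h : Function.Injective (fun y => y + 1)),
    Nat.card_Ico] at hcard
  omega

lemma double_bound_upper (C : Finset ℕ) (hcc : ∀ y ∈ C, y + 1 ∉ C) (M x : ℕ)
    (hC : ∀ y ∈ C, y < M) (hx : x ∈ C) :
    2 * (C.filter (fun y => x < y)).card + x + 1 ≤ M := by
  classical
  set D := C.filter (fun y => x < y) with hD
  have hmemD : ∀ y, y ∈ D ↔ y ∈ C ∧ x < y := fun y => by simp [hD]
  have hsub : D ∪ D.image (fun y => y + 1) ⊆ Finset.Icc (x + 2) M := by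
    intro z hz
    have key : ∀ y ∈ D, x + 2 ≤ y ∧ y < M := by
      intro y hy
      rcases (hmemD y).1 hy with ⟨hyC, h1⟩
      have : y ≠ x + 1 := fun h => hcc x hx (h ▸ hyC)
      exact ⟨by omega, hC y hyC⟩
    rcases Finset.mem_union.1 hz with hz | hz
    · rcases key z hz with ⟨h1, h2⟩
      exact Finset.mem_Icc.2 ⟨h1, by omega⟩
    · rcases Finset.mem_image.1 hz with ⟨y, hy, rfl⟩
      rcases key y hy with ⟨h1, h2⟩
      exact Finset.mem_Icc.2 ⟨by omega, by omega⟩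
  have hdisj : Disjoint D (D.image (fun y => y + 1)) := by
    rw [Finset.disjoint_right]
    intro z hz hz'
    rcases Finset.mem_image.1 hz with ⟨y, hy, rfl⟩
    exact hcc y ((hmemD y).1 hy).1 ((hmemD (y + 1)).1 hz').1
  have hcard := Finset.card_le_card hsub
  rw [Finset.card_union_of_disjoint hdisj,
    Finset.card_image_of_injective _
      (fun a b h => by simpa using h : Function.Injective (fun y => y + 1)),
    Nat.card_Icc] at hcard
  have hxM : x < M := hC x hx
  omega

noncomputable def fmap (C : Finset ℕ) (d x : ℕ) : ℕ :=
  x - (C.filter (fun y => y < x)).card - (if d < x then 1 else 0)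

noncomputable def Phi (C : Finset ℕ) (d : ℕ) : Finset ℕ :=
  (C \ {0, d}).image (fmap C d)

section Main

variable {C : Finset ℕ} {M k d : ℕ}

lemma two_t_le (hcc : ∀ y ∈ C, y + 1 ∉ C) {x : ℕ} (hx : x ∈ C) :
    2 * (C.filter (fun y => y < x)).card ≤ x := by
  have h := double_bound C hcc 0 x hx
  have heq : C.filter (fun y => 0 ≤ y ∧ y < x) = C.filter (fun y => y < x) := by
    apply Finset.filter_congr
    intro y _
    simp
  rw [heq] at h
  omega

lemma t_pos (h0 : 0 ∈ C) {x : ℕ} (hx0 : x ≠ 0) :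
    1 ≤ (C.filter (fun y => y < x)).card := by
  have : (0 : ℕ) ∈ C.filter (fun y => y < x) := Finset.mem_filter.2 ⟨h0, by omega⟩
  exact Finset.card_pos.2 ⟨0, this⟩

lemma t_two (h0 : 0 ∈ C) (hd : d ∈ C) (hd0 : d ≠ 0) {x : ℕ} (hx0 : x ≠ 0) (hdx : d < x) :
    2 ≤ (C.filter (fun y => y < x)).card := by
  have hsub : ({0, d} : Finset ℕ) ⊆ C.filter (fun y => y < x) := by
    intro z hz
    rcases Finset.mem_insert.1 hz with rfl | hz
    · exact Finset.mem_filter.2 ⟨h0, by omega⟩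
    · rw [Finset.mem_singleton] at hz
      subst hz
      exact Finset.mem_filter.2 ⟨hd, hdx⟩
  have := Finset.card_le_card hsub
  rwa [Finset.card_pair (Ne.symm hd0)] at this

lemma partition_card {x : ℕ} (hx : x ∈ C) :
    (C.filter (fun y => y < x)).card + 1 + (C.filter (fun y => x < y)).card = C.card := by
  classical
  have h1 := Finset.card_filter_add_card_filter_not (s := C) (p := fun y => y < x)
  have h2 : C.filter (fun y => ¬ y < x) = insert x (C.filter (fun y => x < y)) := by
    ext y
    simp only [Finset.mem_filter, Finset.mem_insert]
    constructor
    · rintro ⟨hyC, h⟩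
      rcases Nat.lt_or_ge x y with h' | h'
      · exact Or.inr ⟨hyC, h'⟩
      · exact Or.inl (by omega)
    · rintro (rfl | ⟨hyC, h⟩)
      · exact ⟨hx, by omega⟩
      · exact ⟨hyC, by omega⟩
  have h3 : x ∉ C.filter (fun y => x < y) := by
    simp
  rw [h2, Finset.card_insert_of_notMem h3] at h1
  omega

lemma fmap_lt_fmap (hcc : ∀ y ∈ C, y + 1 ∉ C) (h0 : 0 ∈ C) (hd : d ∈ C) (hd0 : d ≠ 0)
    {x x' : ℕ} (hx : x ∈ C) (hx0 : x ≠ 0) (hxd : x ≠ d)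
    (hx' : x' ∈ C) (hx'0 : x' ≠ 0) (hx'd : x' ≠ d)
    (hlt : x < x') : fmap C d x < fmap C d x' := by
  classical
  set t := (C.filter (fun y => y < x)).card with ht
  set t' := (C.filter (fun y => y < x')).card with ht'
  set s := (C.filter (fun y => x ≤ y ∧ y < x')).card with hs
  have hsplit : C.filter (fun y => y < x') =
      C.filter (fun y => y < x) ∪ C.filter (fun y => x ≤ y ∧ y < x') := by
    ext y
    by_cases hyC : y ∈ C
    · simp only [Finset.mem_filter, Finset.mem_union, hyC, true_and]
      omega
    · simp [hyC]
  have hdisj : Disjoint (C.filter (fun y => y < x)) (C.filter (fun y => x ≤ y ∧ y < x')) := by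
    rw [Finset.disjoint_left]
    intro y hy hy'
    simp only [Finset.mem_filter] at hy hy'
    omega
  have hts : t' = t + s := by
    rw [ht', hsplit, Finset.card_union_of_disjoint hdisj]
  have h2t : 2 * t ≤ x := two_t_le hcc hx
  have h2s : 2 * s ≤ x' - x := double_bound C hcc x x' hx'
  have hxs : x ∈ C.filter (fun y => x ≤ y ∧ y < x') :=
    Finset.mem_filter.2 ⟨hx, le_refl x, hlt⟩
  have hs1 : 1 ≤ s := Finset.card_pos.2 ⟨x, hxs⟩
  have ht1 : 1 ≤ t := t_pos h0 hx0
  rcases lt_trichotomy d x with hdx | hdx | hdx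
  · -- d < x, so d < x'
    have ht2 : 2 ≤ t := t_two h0 hd hd0 hx0 hdx
    simp only [fmap, if_pos hdx, if_pos (lt_trans hdx hlt), ← ht, ← ht', hts]
    omega
  · exact absurd hdx.symm hxd
  · -- x < d
    rcases lt_trichotomy d x' with hdx' | hdx' | hdx'
    · -- x < d < x'
      have hsub : ({x, d} : Finset ℕ) ⊆ C.filter (fun y => x ≤ y ∧ y < x') := by
        intro z hz
        rcases Finset.mem_insert.1 hz with rfl | hz
        · exact hxs
        · rw [Finset.mem_singleton] at hz
          subst hz
          exact Finset.mem_filter.2 ⟨hd, le_of_lt hdx, hdx'⟩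
      have hs2 : 2 ≤ s := by
        have := Finset.card_le_card hsub
        rwa [Finset.card_pair (fun h => hxd h)] at this
      simp only [fmap, if_neg (by omega : ¬ d < x), if_pos hdx', ← ht, ← ht', hts]
      omega
    · exact absurd hdx'.symm hx'd
    · -- x' < d
      simp only [fmap, if_neg (by omega : ¬ d < x), if_neg (by omega : ¬ d < x'),
        ← ht, ← ht', hts]
      omega

lemma one_le_fmap (hcc : ∀ y ∈ C, y + 1 ∉ C) (h0 : 0 ∈ C) (hd : d ∈ C) (hd0 : d ≠ 0)
    {x : ℕ} (hx : x ∈ C) (hx0 : x ≠ 0) (hxd : x ≠ d) : 1 ≤ fmap C d x := by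
  have h2t := two_t_le hcc hx
  have ht1 := t_pos (C := C) h0 hx0
  unfold fmap
  by_cases hdx : d < x
  · have ht2 := t_two h0 hd hd0 hx0 hdx
    rw [if_pos hdx]
    omega
  · rw [if_neg hdx]
    omega

lemma fmap_le (hcc : ∀ y ∈ C, y + 1 ∉ C) (h0 : 0 ∈ C) (hd : d ∈ C) (hd0 : d ≠ 0)
    (hC : ∀ y ∈ C, y < M) (hcard : C.card = k)
    {x : ℕ} (hx : x ∈ C) (hx0 : x ≠ 0) (hxd : x ≠ d) : fmap C d x ≤ M - k - 1 := by
  have h2u := double_bound_upper C hcc M x hC hx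
  have hpart := partition_card hx
  unfold fmap
  by_cases hdx : d < x
  · rw [if_pos hdx]
    omega
  · have hdx' : x < d := by omega
    have hdu : d ∈ C.filter (fun y => x < y) := Finset.mem_filter.2 ⟨hd, hdx'⟩
    have hu1 : 1 ≤ (C.filter (fun y => x < y)).card := Finset.card_pos.2 ⟨d, hdu⟩
    rw [if_neg hdx]
    omega

lemma mem_sdiff_pair {x : ℕ} : x ∈ C \ {0, d} ↔ x ∈ C ∧ x ≠ 0 ∧ x ≠ d := by
  simp [Finset.mem_sdiff, Finset.mem_insert, Finset.mem_singleton, not_or]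

lemma injOn_fmap (hcc : ∀ y ∈ C, y + 1 ∉ C) (h0 : 0 ∈ C) (hd : d ∈ C) (hd0 : d ≠ 0) :
    Set.InjOn (fmap C d) (C \ {0, d} : Finset ℕ) := by
  intro x hxm y hym hxy
  have hx := mem_sdiff_pair.1 (Finset.mem_coe.1 hxm)
  have hy := mem_sdiff_pair.1 (Finset.mem_coe.1 hym)
  rcases lt_trichotomy x y with h | h | h
  · have := fmap_lt_fmap hcc h0 hd hd0 hx.1 hx.2.1 hx.2.2 hy.1 hy.2.1 hy.2.2 h
    omega
  · exact h
  · have := fmap_lt_fmap hcc h0 hd hd0 hy.1 hy.2.1 hy.2.2 hx.1 hx.2.1 hx.2.2 h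
    omega

lemma card_phi (hcc : ∀ y ∈ C, y + 1 ∉ C) (h0 : 0 ∈ C) (hd : d ∈ C) (hd0 : d ≠ 0)
    (hcard : C.card = k) : (Phi C d).card = k - 2 := by
  rw [Phi, Finset.card_image_of_injOn (injOn_fmap hcc h0 hd hd0)]
  have hsub : ({0, d} : Finset ℕ) ⊆ C := by
    intro z hz
    rcases Finset.mem_insert.1 hz with rfl | hz
    · exact h0
    · rw [Finset.mem_singleton] at hz; subst hz; exact hd
  rw [Finset.card_sdiff_of_subset hsub, Finset.card_pair (Ne.symm hd0), hcard]

lemma phi_mem (hcc : ∀ y ∈ C, y + 1 ∉ C) (h0 : 0 ∈ C) (hd : d ∈ C) (hd0 : d ≠ 0)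
    (hC : ∀ y ∈ C, y < M) (hcard : C.card = k) :
    Phi C d ∈ (Finset.Icc 1 (M - k - 1)).powersetCard (k - 2) := by
  rw [Finset.mem_powersetCard]
  constructor
  · intro τ hτ
    rcases Finset.mem_image.1 hτ with ⟨x, hx, rfl⟩
    rw [mem_sdiff_pair] at hx
    exact Finset.mem_Icc.2 ⟨one_le_fmap hcc h0 hd hd0 hx.1 hx.2.1 hx.2.2,
      fmap_le hcc h0 hd hd0 hC hcard hx.1 hx.2.1 hx.2.2⟩
  · exact card_phi hcc h0 hd hd0 hcard

noncomputable def rho (T : Finset ℕ) (d τ : ℕ) : ℕ :=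
  τ + (T.filter (fun σ => σ ≤ τ)).card +
    (if τ + (T.filter (fun σ => σ ≤ τ)).card < d then 0 else 2)

lemma rho_fmap (hcc : ∀ y ∈ C, y + 1 ∉ C) (h0 : 0 ∈ C) (hd : d ∈ C) (hd0 : d ≠ 0)
    {x : ℕ} (hx : x ∈ C) (hx0 : x ≠ 0) (hxd : x ≠ d) :
    rho (Phi C d) d (fmap C d x) = x := by
  classical
  have hxmem : x ∈ C \ {0, d} := mem_sdiff_pair.2 ⟨hx, hx0, hxd⟩
  -- Step 1: the filter on the image equals image of filter
  have hstep1 : (Phi C d).filter (fun σ => σ ≤ fmap C d x) =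
      ((C \ {0, d}).filter (fun y => fmap C d y ≤ fmap C d x)).image (fmap C d) := by
    rw [Phi, Finset.filter_image]
  have hstep2 : ((C \ {0, d}).filter (fun y => fmap C d y ≤ fmap C d x)) =
      ((C \ {0, d}).filter (fun y => y ≤ x)) := by
    apply Finset.filter_congr
    intro y hy
    rw [mem_sdiff_pair] at hy
    constructor
    · intro hle
      by_contra hgt
      push_neg at hgt
      have := fmap_lt_fmap hcc h0 hd hd0 hx hx0 hxd hy.1 hy.2.1 hy.2.2 hgt
      omega
    · intro hle
      rcases Nat.lt_or_ge y x with h | h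
      · exact le_of_lt (fmap_lt_fmap hcc h0 hd hd0 hy.1 hy.2.1 hy.2.2 hx hx0 hxd h)
      · have : y = x := by omega
        subst this; exact le_refl _
  have hcardeq : ((Phi C d).filter (fun σ => σ ≤ fmap C d x)).card =
      ((C \ {0, d}).filter (fun y => y ≤ x)).card := by
    rw [hstep1, hstep2, Finset.card_image_of_injOn
      ((injOn_fmap hcc h0 hd hd0).mono (by
        intro z hz
        simp only [Finset.coe_filter, Set.mem_setOf_eq] at hz
        exact Finset.mem_coe.2 hz.1))]
  -- Step 2 : compute that card
  set t := (C.filter (fun y => y < x)).card with ht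
  have hA : (C \ {0, d}).filter (fun y => y ≤ x) =
      insert x ((C.filter (fun y => y < x)) \ {0, d}) := by
    ext y
    by_cases hyC : y ∈ C
    · simp only [Finset.mem_filter, Finset.mem_sdiff, Finset.mem_insert,
        Finset.mem_singleton, hyC, true_and, not_or]
      constructor <;> intro h <;> omega
    · have hyx : y ≠ x := fun h => hyC (h ▸ hx)
      simp [Finset.mem_filter, Finset.mem_sdiff, hyC, hyx]
  have hxnot : x ∉ (C.filter (fun y => y < x)) \ {0, d} := by
    simp [Finset.mem_sdiff]
  have hint : (C.filter (fun y => y < x)) ∩ ({0, d} : Finset ℕ) =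
      if d < x then ({0, d} : Finset ℕ) else {0} := by
    by_cases hdx : d < x
    · rw [if_pos hdx]
      apply Finset.inter_eq_right.2
      intro z hz
      rcases Finset.mem_insert.1 hz with rfl | hz
      · exact Finset.mem_filter.2 ⟨h0, by omega⟩
      · rw [Finset.mem_singleton] at hz; subst hz
        exact Finset.mem_filter.2 ⟨hd, hdx⟩
    · rw [if_neg hdx]
      ext z
      by_cases hzC : z ∈ C
      · simp only [Finset.mem_inter, Finset.mem_filter, Finset.mem_insert,
          Finset.mem_singleton, hzC, true_and]
        constructor <;> intro h <;> omega
      · have hz0 : z ≠ 0 := fun h => hzC (h ▸ h0)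
        simp [hzC, hz0]
  have hintcard : ((C.filter (fun y => y < x)) ∩ ({0, d} : Finset ℕ)).card =
      if d < x then 2 else 1 := by
    rw [hint]
    by_cases hdx : d < x
    · rw [if_pos hdx, if_pos hdx, Finset.card_pair (Ne.symm hd0)]
    · rw [if_neg hdx, if_neg hdx, Finset.card_singleton]
  have hsdcard := Finset.card_sdiff_add_card_inter (C.filter (fun y => y < x))
      ({0, d} : Finset ℕ)
  have h2t : 2 * t ≤ x := two_t_le hcc hx
  have ht1 : 1 ≤ t := t_pos h0 hx0
  have ht2 : d < x → 2 ≤ t := fun hdx => t_two h0 hd hd0 hx0 hdx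
  have hrval : ((Phi C d).filter (fun σ => σ ≤ fmap C d x)).card =
      t - (if d < x then 1 else 0) := by
    rw [hcardeq, hA, Finset.card_insert_of_notMem hxnot]
    by_cases hdx : d < x
    · rw [if_pos hdx] at hintcard ⊢
      have := ht2 hdx
      omega
    · rw [if_neg hdx] at hintcard ⊢
      omega
  have hxd2 : d < x → d + 2 ≤ x := by
    intro hdx
    have : x ≠ d + 1 := fun h => hcc d hd (h ▸ hx)
    omega
  rw [rho, hrval]
  by_cases hdx : d < x
  · have h2 := ht2 hdx
    have h3 := hxd2 hdx
    simp only [fmap, if_pos hdx]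
    rw [if_neg (by omega)]
    omega
  · have h4 : x < d := by
      rcases lt_trichotomy d x with h | h | h
      · exact absurd h hdx
      · exact absurd h.symm hxd
      · exact h
    simp only [fmap, if_neg hdx]
    rw [if_pos (by omega)]
    omega

lemma phi_inj (hcc : ∀ y ∈ C, y + 1 ∉ C) (h0 : 0 ∈ C) (hd : d ∈ C) (hd0 : d ≠ 0)
    {C' : Finset ℕ} (hcc' : ∀ y ∈ C', y + 1 ∉ C') (h0' : 0 ∈ C') (hd' : d ∈ C')
    (heq : Phi C d = Phi C' d) : C = C' := by
  classical
  have key : ∀ (D : Finset ℕ), (∀ y ∈ D, y + 1 ∉ D) → 0 ∈ D → d ∈ D →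
      D = insert 0 (insert d ((Phi D d).image (rho (Phi D d) d))) := by
    intro D hccD h0D hdD
    have himg : (Phi D d).image (rho (Phi D d) d) = D \ {0, d} := by
      have key2 : ∀ (s : Finset ℕ) (f g : ℕ → ℕ), (∀ x ∈ s, g (f x) = x) →
          (s.image f).image g = s := by
        intro s f g h
        rw [Finset.image_image]
        calc s.image (g ∘ f) = s.image id := Finset.image_congr (fun x hx => h x hx)
        _ = s := Finset.image_id
      exact key2 (D \ {0, d}) (fmap D d) (rho (Phi D d) d) (fun x hx => by
        rw [mem_sdiff_pair] at hx
        exact rho_fmap hccD h0D hdD hd0 hx.1 hx.2.1 hx.2.2)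
    rw [himg]
    ext z
    constructor
    · intro hzD
      rcases eq_or_ne z 0 with rfl | hz0
      · exact Finset.mem_insert_self _ _
      rcases eq_or_ne z d with rfl | hzd
      · exact Finset.mem_insert_of_mem (Finset.mem_insert_self _ _)
      · exact Finset.mem_insert_of_mem (Finset.mem_insert_of_mem
          (mem_sdiff_pair.2 ⟨hzD, hz0, hzd⟩))
    · intro hzm
      rcases Finset.mem_insert.1 hzm with rfl | hzm
      · exact h0D
      rcases Finset.mem_insert.1 hzm with rfl | hzm
      · exact hdD
      · exact (mem_sdiff_pair.1 hzm).1
  rw [key C hcc h0 hd, key C' hcc' h0' hd', heq]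

end Main


/-! ### Positions and cyclic coordinates -/

def posIn (X : Finset ℕ) (x : ℕ) : ℕ := (X.filter (fun y => y < x)).card

lemma posIn_lt {X : Finset ℕ} {x : ℕ} (hx : x ∈ X) : posIn X x < X.card := by
  apply Finset.card_lt_card
  rw [Finset.filter_ssubset]
  exact ⟨x, hx, lt_irrefl x⟩

lemma posIn_strictMono {X : Finset ℕ} {x y : ℕ} (hx : x ∈ X) (hxy : x < y) :
    posIn X x < posIn X y := by
  apply Finset.card_lt_card
  constructor
  · intro z hz
    rw [Finset.mem_filter] at hz ⊢
    exact ⟨hz.1, by omega⟩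
  · intro hsub
    have := hsub (Finset.mem_filter.2 ⟨hx, hxy⟩)
    rw [Finset.mem_filter] at this
    omega

lemma posIn_lt_iff {X : Finset ℕ} {x y : ℕ} (hx : x ∈ X) (hy : y ∈ X) :
    posIn X x < posIn X y ↔ x < y := by
  constructor
  · intro h
    by_contra hc
    push_neg at hc
    rcases Nat.lt_or_ge y x with h' | h'
    · have := posIn_strictMono hy h'
      omega
    · have : x = y := by omega
      subst this
      omega
  · exact posIn_strictMono hx

lemma posIn_inj {X : Finset ℕ} {x y : ℕ} (hx : x ∈ X) (hy : y ∈ X)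
    (h : posIn X x = posIn X y) : x = y := by
  rcases lt_trichotomy x y with h' | h' | h'
  · have := posIn_strictMono hx h'; omega
  · exact h'
  · have := posIn_strictMono hy h'; omega

lemma adj_of_posIn_succ {X : Finset ℕ} {x y : ℕ} (hx : x ∈ X) (hy : y ∈ X)
    (h : posIn X y = posIn X x + 1) : CyclAdj X x y := by
  have hxy : x < y := by
    rw [← posIn_lt_iff hx hy]
    omega
  refine ⟨Nat.ne_of_lt hxy, Or.inl ?_⟩
  intro z hz hcon
  rw [min_eq_left (le_of_lt hxy), max_eq_right (le_of_lt hxy)] at hcon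
  have h1 := posIn_strictMono hx hcon.1
  have h2 := posIn_strictMono hz hcon.2
  omega

lemma adj_of_posIn_wrap {X : Finset ℕ} {x y : ℕ} (hx : x ∈ X) (hy : y ∈ X)
    (hm : 2 ≤ X.card) (hy0 : posIn X y = 0) (hx1 : posIn X x = X.card - 1) :
    CyclAdj X y x := by
  have hyx : y < x := by
    rw [← posIn_lt_iff hy hx]
    omega
  refine ⟨Nat.ne_of_lt hyx, Or.inr ?_⟩
  intro z hz
  rw [min_eq_left (le_of_lt hyx), max_eq_right (le_of_lt hyx)]
  constructor
  · by_contra hc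
    push_neg at hc
    have := posIn_strictMono hz hc
    omega
  · by_contra hc
    push_neg at hc
    have := posIn_strictMono hx hc
    have := posIn_lt hz
    omega

noncomputable def cVal (X : Finset ℕ) (j x : ℕ) : ℕ :=
  (posIn X x + (X.card - posIn X j)) % X.card

lemma cVal_lt {X : Finset ℕ} (j : ℕ) {x : ℕ} (hx : x ∈ X) : cVal X j x < X.card := by
  have h0 : 0 < X.card := Finset.card_pos.2 ⟨x, hx⟩
  exact Nat.mod_lt _ h0

lemma cVal_j {X : Finset ℕ} {j : ℕ} (hj : j ∈ X) : cVal X j j = 0 := by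
  unfold cVal
  have h1 : posIn X j < X.card := posIn_lt hj
  rw [show posIn X j + (X.card - posIn X j) = X.card by omega, Nat.mod_self]

lemma cVal_modeq {X : Finset ℕ} {j x y : ℕ} (hx : x ∈ X) (hy : y ∈ X)
    (h : cVal X j y = (cVal X j x + 1) % X.card) :
    posIn X y = (posIn X x + 1) % X.card := by
  set m := X.card with hm
  set r := m - posIn X j with hr
  have h1 : (posIn X y + r) % m = ((posIn X x + r) % m + 1) % m := h
  rw [Nat.mod_add_mod] at h1
  have h2 : posIn X y ≡ posIn X x + 1 [MOD m] := by
    have : posIn X y + r ≡ (posIn X x + 1) + r [MOD m] := by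
      unfold Nat.ModEq
      rw [h1]
      ring_nf
    exact Nat.ModEq.add_right_cancel' r this
  have h3 : posIn X y < m := posIn_lt hy
  calc posIn X y = posIn X y % m := (Nat.mod_eq_of_lt h3).symm
  _ = (posIn X x + 1) % m := h2

lemma cVal_injOn {X : Finset ℕ} {j x y : ℕ} (hx : x ∈ X) (hy : y ∈ X)
    (h : cVal X j x = cVal X j y) : x = y := by
  set m := X.card with hm
  set r := m - posIn X j with hr
  have h2 : posIn X x ≡ posIn X y [MOD m] :=
    Nat.ModEq.add_right_cancel' r h
  have h3 : posIn X x < m := posIn_lt hx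
  have h4 : posIn X y < m := posIn_lt hy
  have h5 : posIn X x = posIn X y := by
    have := h2
    unfold Nat.ModEq at this
    rwa [Nat.mod_eq_of_lt h3, Nat.mod_eq_of_lt h4] at this
  exact posIn_inj hx hy h5

lemma no_succ {X : Finset ℕ} {j : ℕ} {B : Finset ℕ} (hB : B ⊆ X)
    (hst : ∀ x ∈ B, ∀ y ∈ B, ¬ CyclAdj X x y) (hm : 2 ≤ X.card)
    {x y : ℕ} (hx : x ∈ B) (hy : y ∈ B)
    (h : cVal X j y = (cVal X j x + 1) % X.card) : False := by
  have hpos := cVal_modeq (hB hx) (hB hy) h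
  have hxlt : posIn X x < X.card := posIn_lt (hB hx)
  by_cases h1 : posIn X x + 1 < X.card
  · rw [Nat.mod_eq_of_lt h1] at hpos
    exact hst x hx y hy (adj_of_posIn_succ (hB hx) (hB hy) hpos)
  · have h2 : posIn X x + 1 = X.card := by omega
    rw [h2, Nat.mod_self] at hpos
    exact hst y hy x hx (adj_of_posIn_wrap (hB hx) (hB hy) hm hpos (by omega))

/-! ### The pair bound -/

lemma pair_bound (X : Finset ℕ) (k : ℕ) (hk : 2 ≤ k) (j a : ℕ) (hj : j ∈ X) (hja : j ≠ a)
    (F : Finset (Finset ℕ)) (hF : F ⊆ xStableSets X k) :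
    (F.filter (fun B => j ∈ B ∧ a ∈ B)).card ≤ (X.card - k - 2).choose (k - 2) := by
  classical
  by_cases haX : a ∈ X
  case neg =>
    have hempty : F.filter (fun B => j ∈ B ∧ a ∈ B) = ∅ := by
      rw [Finset.filter_eq_empty_iff]
      intro B hB hcon
      have hBX : B ⊆ X := by
        have := hF hB
        rw [xStableSets, Finset.mem_filter, Finset.mem_powersetCard] at this
        exact this.1.1
      exact haX (hBX hcon.2)
    rw [hempty]
    simp
  case pos =>
  set m := X.card with hm
  set d := cVal X j a with hd
  -- facts about every B in the filtered family
  have hfacts : ∀ B ∈ F.filter (fun B => j ∈ B ∧ a ∈ B),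
      (∀ y ∈ B.image (cVal X j), y + 1 ∉ B.image (cVal X j)) ∧
      0 ∈ B.image (cVal X j) ∧ d ∈ B.image (cVal X j) ∧ d ≠ 0 ∧
      (∀ y ∈ B.image (cVal X j), y < m - 1) ∧ (B.image (cVal X j)).card = k := by
    intro B hBmem
    rw [Finset.mem_filter] at hBmem
    obtain ⟨hBF, hjB, haB⟩ := hBmem
    have hBx := hF hBF
    rw [xStableSets, Finset.mem_filter, Finset.mem_powersetCard] at hBx
    obtain ⟨⟨hBX, hBcard⟩, hXst⟩ := hBx
    have hst := hXst.2
    have hm2 : 2 ≤ m := by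
      have := Finset.card_le_card hBX
      omega
    have himgmem : ∀ y ∈ B.image (cVal X j), ∃ b ∈ B, cVal X j b = y := by
      intro y hy
      rcases Finset.mem_image.1 hy with ⟨b, hb, rfl⟩
      exact ⟨b, hb, rfl⟩
    have hlt : ∀ y ∈ B.image (cVal X j), y < m := by
      intro y hy
      rcases himgmem y hy with ⟨b, hb, rfl⟩
      exact cVal_lt j (hBX hb)
    have hnosucc : ∀ y ∈ B.image (cVal X j), y + 1 ∉ B.image (cVal X j) := by
      intro y hy hy1
      rcases himgmem y hy with ⟨b, hb, hbv⟩
      rcases himgmem (y + 1) hy1 with ⟨b', hb', hbv'⟩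
      have hbd : y + 1 < m := hlt (y + 1) hy1
      have : cVal X j b' = (cVal X j b + 1) % m := by
        rw [hbv', hbv, Nat.mod_eq_of_lt hbd]
      exact no_succ hBX hst hm2 hb hb' this
    have h0mem : 0 ∈ B.image (cVal X j) := by
      refine Finset.mem_image.2 ⟨j, hjB, cVal_j hj⟩
    have hbound : ∀ y ∈ B.image (cVal X j), y < m - 1 := by
      intro y hy
      have h1 := hlt y hy
      by_contra hc
      have hy1 : y = m - 1 := by omega
      rcases himgmem y hy with ⟨b, hb, hbv⟩
      have : cVal X j j = (cVal X j b + 1) % m := by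
        rw [cVal_j hj, hbv, hy1]
        have : m - 1 + 1 = m := by omega
        rw [this, Nat.mod_self]
      exact no_succ hBX hst hm2 hb hjB this
    refine ⟨hnosucc, h0mem, Finset.mem_image.2 ⟨a, haB, rfl⟩, ?_, hbound, ?_⟩
    · intro hd0
      exact hja (cVal_injOn haX hj (by rw [cVal_j hj]; exact hd0)).symm
    · rw [Finset.card_image_of_injOn (fun p hp q hq hpq =>
        cVal_injOn (hBX hp) (hBX hq) hpq), hBcard]
  -- the injection
  have hinj : ∀ B ∈ F.filter (fun B => j ∈ B ∧ a ∈ B),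
      ∀ B' ∈ F.filter (fun B => j ∈ B ∧ a ∈ B),
      Phi (B.image (cVal X j)) d = Phi (B'.image (cVal X j)) d → B = B' := by
    intro B hB B' hB' hPhi
    obtain ⟨hcc, h0, hdm, hd0, _, _⟩ := hfacts B hB
    obtain ⟨hcc', h0', hdm', _, _, _⟩ := hfacts B' hB'
    have hCeq : B.image (cVal X j) = B'.image (cVal X j) :=
      phi_inj hcc h0 hdm hd0 hcc' h0' hdm' hPhi
    -- recover B = B'
    have hBX : B ⊆ X := by
      have := hF (Finset.mem_filter.1 hB).1
      rw [xStableSets, Finset.mem_filter, Finset.mem_powersetCard] at this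
      exact this.1.1
    have hBX' : B' ⊆ X := by
      have := hF (Finset.mem_filter.1 hB').1
      rw [xStableSets, Finset.mem_filter, Finset.mem_powersetCard] at this
      exact this.1.1
    ext b
    constructor
    · intro hb
      have : cVal X j b ∈ B'.image (cVal X j) := by
        rw [← hCeq]
        exact Finset.mem_image.2 ⟨b, hb, rfl⟩
      rcases Finset.mem_image.1 this with ⟨b', hb', hbv⟩
      exact cVal_injOn (hBX' hb') (hBX hb) hbv ▸ hb'
    · intro hb
      have : cVal X j b ∈ B.image (cVal X j) := by
        rw [hCeq]
        exact Finset.mem_image.2 ⟨b, hb, rfl⟩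
      rcases Finset.mem_image.1 this with ⟨b', hb', hbv⟩
      exact cVal_injOn (hBX hb') (hBX' hb) hbv ▸ hb'
  have hmaps : ∀ B ∈ F.filter (fun B => j ∈ B ∧ a ∈ B),
      Phi (B.image (cVal X j)) d ∈ (Finset.Icc 1 (m - 1 - k - 1)).powersetCard (k - 2) := by
    intro B hB
    obtain ⟨hcc, h0, hdm, hd0, hbd, hcard⟩ := hfacts B hB
    exact phi_mem hcc h0 hdm hd0 hbd hcard
  have hcard := Finset.card_le_card_of_injOn _ hmaps hinj
  rw [Finset.card_powersetCard, Nat.card_Icc] at hcard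
  have : m - 1 - k - 1 + 1 - 1 = m - k - 2 := by omega
  rwa [this] at hcard

end Stmt11Aux

theorem stmt_11 (n k : ℕ) (hk : 2 ≤ k) (hn : 2 * k ≤ n) (X : Finset ℕ)
    (hX : X ⊆ Finset.Icc 1 n) (F : Finset (Finset ℕ)) (hF : F ⊆ xStableSets X k)
    (γ : ℝ) (hγ0 : 0 < γ) (hγ1 : γ ≤ 1) (j : ℕ) (hj : j ∈ X)
    (hpop : γ * F.card ≤ ((F.filter (fun B => j ∈ B)).card : ℝ))
    (A : Finset ℕ) (hA : A ⊆ Finset.Icc 1 n) (hAcard : A.card = k) (hjA : j ∉ A) :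
    γ * F.card - k * Nat.choose (X.card - k - 2) (k - 2)
      ≤ ((F.filter (fun B => Disjoint A B)).card : ℝ) := by
  classical
  set ch := Nat.choose (X.card - k - 2) (k - 2) with hch
  set G := F.filter (fun B => j ∈ B) with hG
  set D := F.filter (fun B => Disjoint A B) with hD
  have hGsplit : G ⊆ D ∪ F.filter (fun B => j ∈ B ∧ ¬ Disjoint A B) := by
    intro B hB
    rw [hG, Finset.mem_filter] at hB
    by_cases hdis : Disjoint A B
    · exact Finset.mem_union_left _ (Finset.mem_filter.2 ⟨hB.1, hdis⟩)
    · exact Finset.mem_union_right _ (Finset.mem_filter.2 ⟨hB.1, hB.2, hdis⟩)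
  have hE : F.filter (fun B => j ∈ B ∧ ¬ Disjoint A B) ⊆
      A.biUnion (fun a => F.filter (fun B => j ∈ B ∧ a ∈ B)) := by
    intro B hB
    rw [Finset.mem_filter] at hB
    obtain ⟨hBF, hjB, hnd⟩ := hB
    rcases Finset.not_disjoint_iff.1 hnd with ⟨a, haA, haB⟩
    exact Finset.mem_biUnion.2 ⟨a, haA, Finset.mem_filter.2 ⟨hBF, hjB, haB⟩⟩
  have hEcard : (F.filter (fun B => j ∈ B ∧ ¬ Disjoint A B)).card ≤ k * ch := by
    calc (F.filter (fun B => j ∈ B ∧ ¬ Disjoint A B)).card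
        ≤ (A.biUnion (fun a => F.filter (fun B => j ∈ B ∧ a ∈ B))).card :=
          Finset.card_le_card hE
    _ ≤ ∑ a ∈ A, (F.filter (fun B => j ∈ B ∧ a ∈ B)).card := Finset.card_biUnion_le
    _ ≤ ∑ _a ∈ A, ch := Finset.sum_le_sum (fun a haA =>
          Stmt11Aux.pair_bound X k hk j a hj (fun h => hjA (by rw [h]; exact haA)) F hF)
    _ = k * ch := by rw [Finset.sum_const, hAcard, smul_eq_mul]
  have hGD : G.card ≤ D.card + k * ch := by
    calc G.card ≤ (D ∪ F.filter (fun B => j ∈ B ∧ ¬ Disjoint A B)).card :=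
          Finset.card_le_card hGsplit
    _ ≤ D.card + (F.filter (fun B => j ∈ B ∧ ¬ Disjoint A B)).card :=
          Finset.card_union_le _ _
    _ ≤ D.card + k * ch := by omega
  have hcast : (G.card : ℝ) ≤ (D.card : ℝ) + (k : ℝ) * (ch : ℝ) := by
    exact_mod_cast hGD
  linarith
end

section
/- For integers k ≥ 2 and a set X of size |X| ≥ 10k³, let F be a family of X-stable k-subsets of X with |F| ≥ (1/(2|X|))·N_X, where N_X is the number of X-stable k-subsets of X, let γ ∈ (0,1], and let j ∈ X belong to at least γ·|F| sets of F. Then for every k-set A with j ∉ A, the fraction of members of F disjoint from A is at least γ − 1/4. -/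
open Finset

attribute [local instance] Classical.propDecidable

/-!
A member of `F` through `j` that meets `A` contains `j` and some `a ∈ A`, and at most
`C(n-2, k-2)` of the `k`-subsets of `X` (`n = |X|`) contain a given pair, so at most
`k C(n-2, k-2)` members of `F` through `j` meet `A`. A non-stable `k`-set contains one of the `n`
cyclically adjacent pairs, so `N_X ≥ C(n, k) - n C(n-2, k-2) ≥ 8nk C(n-2, k-2)` once `n ≥ 10k³`;
hence `|F| ≥ N_X / (2n) ≥ 4k C(n-2, k-2)` and the loss is at most `|F| / 4`.
-/

lemma Finset.card_filter_powersetCard_subset_le {α : Type*} [DecidableEq α]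
    (s t : Finset α) (n : ℕ) :
    #((t.powersetCard n).filter (s ⊆ ·)) ≤ (#t - #s).choose (n - #s) := by
  by_cases h : s ⊆ t ∧ #s ≤ n
  · exact (card_filter_powersetCard_subset s t n h.1 h.2).le
  · convert Nat.zero_le _
    rw [card_eq_zero, filter_eq_empty_iff]
    intro x hx hsx
    rw [mem_powersetCard] at hx
    exact h ⟨hsx.trans hx.1, hx.2 ▸ card_le_card hsx⟩

lemma Finset.card_filter_powersetCard_pair_subset_le {α : Type*} [DecidableEq α] {a b : α}
    (hab : a ≠ b) (t : Finset α) (n : ℕ) :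
    #((t.powersetCard n).filter ({a, b} ⊆ ·)) ≤ (#t - 2).choose (n - 2) := by
  simpa [card_pair hab] using card_filter_powersetCard_subset_le {a, b} t n

lemma card_filter_mem_le_card_filter_disjoint_add {X A : Finset ℕ} {F : Finset (Finset ℕ)}
    {k j : ℕ} (hF : F ⊆ X.powersetCard k) (hjA : j ∉ A) :
    #(F.filter (fun B => j ∈ B)) ≤
      #(F.filter (fun B => Disjoint A B)) + #A * (#X - 2).choose (k - 2) := by
  have hcover : F.filter (fun B => j ∈ B) ⊆ F.filter (fun B => Disjoint A B) ∪
      A.biUnion (fun a => (X.powersetCard k).filter ({j, a} ⊆ ·)) := by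
    intro B hB
    rw [mem_filter] at hB
    by_cases hAB : Disjoint A B
    · exact mem_union_left _ (mem_filter.mpr ⟨hB.1, hAB⟩)
    · obtain ⟨a, haA, haB⟩ := not_disjoint_iff.mp hAB
      refine mem_union_right _ (mem_biUnion.mpr ⟨a, haA, mem_filter.mpr ⟨hF hB.1, ?_⟩⟩)
      exact insert_subset hB.2 (singleton_subset_iff.mpr haB)
  have hpairs : ∀ a ∈ A, #((X.powersetCard k).filter ({j, a} ⊆ ·)) ≤ (#X - 2).choose (k - 2) :=
    fun a ha => card_filter_powersetCard_pair_subset_le (ne_of_mem_of_not_mem ha hjA).symm _ _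
  calc _ ≤ _ := card_le_card hcover
    _ ≤ _ := card_union_le _ _
    _ ≤ _ := by
      gcongr
      simpa using card_biUnion_le.trans (sum_le_card_nsmul _ _ _ hpairs)

lemma CyclAdj.symm {X : Finset ℕ} {a b : ℕ} (h : CyclAdj X a b) : CyclAdj X b a := by
  obtain ⟨hne, h⟩ := h
  exact ⟨hne.symm, by rwa [min_comm b a, max_comm b a]⟩

section Enumeration

variable {X : Finset ℕ} {n : ℕ} (e : Fin n ↪o ℕ)

/-- Enumerating `X` increasingly by `e`, cyclic adjacency is adjacency of indices in `ℤ/n`. -/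
lemma CyclAdj.finRotate_eq (he : Set.range e = X) {i j : Fin n} (hij : i < j)
    (h : CyclAdj X (e i) (e j)) :
    finRotate n i = j ∨ finRotate n j = i := by
  have hmem : ∀ l, e l ∈ X := fun l => by rw [← Finset.mem_coe, ← he]; exact ⟨l, rfl⟩
  obtain ⟨-, hgap | hspan⟩ := h <;>
    simp only [min_eq_left (e.monotone hij.le), max_eq_right (e.monotone hij.le)] at *
  all_goals cases n with
  | zero => exact i.elim0
  | succ m => ?_
  · left
    have hnext : (j : ℕ) = i + 1 := by
      by_contra hne
      have hlt : (i : ℕ) + 1 < j := by omega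
      exact hgap (e ⟨i + 1, by omega⟩) (hmem _)
        ⟨e.strictMono (Fin.mk_lt_mk.mpr (by omega)), e.strictMono (Fin.mk_lt_mk.mpr hlt)⟩
    have hi : i ≠ Fin.last m := fun hi => by
      rw [hi, Fin.val_last] at hnext
      exact absurd j.isLt (by omega)
    exact Fin.ext (by rw [coe_finRotate_of_ne_last hi, hnext])
  · right
    have hi : i = 0 := le_antisymm (e.le_iff_le.mp (hspan _ (hmem 0)).1) (Fin.zero_le _)
    have hj : j = Fin.last m := le_antisymm (Fin.le_last _) (e.le_iff_le.mp (hspan _ (hmem _)).2)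
    rw [hi, hj, finRotate_last]

lemma exists_finRotate_pair_subset_of_not_xStable (he : Set.range e = X) {B : Finset ℕ}
    (hB : B ⊆ X) (h : ¬ XStable X B) : ∃ i, {e i, e (finRotate n i)} ⊆ B := by
  simp only [XStable, hB, true_and, not_forall, not_not] at h
  obtain ⟨a, ha, b, hb, hab⟩ := h
  obtain ⟨i, rfl⟩ : a ∈ Set.range e := he ▸ hB ha
  obtain ⟨j, rfl⟩ : b ∈ Set.range e := he ▸ hB hb
  have pair : ∀ {l l'}, finRotate n l = l' → e l ∈ B → e l' ∈ B →
      ∃ i, {e i, e (finRotate n i)} ⊆ B :=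
    fun {l _} h hl hl' => ⟨l, insert_subset hl (singleton_subset_iff.mpr (h ▸ hl'))⟩
  rcases lt_trichotomy i j with hij | rfl | hij
  · rcases hab.finRotate_eq e he hij with h | h
    exacts [pair h ha hb, pair h hb ha]
  · exact absurd rfl hab.1
  · rcases hab.symm.finRotate_eq e he hij with h | h
    exacts [pair h hb ha, pair h ha hb]

end Enumeration

lemma choose_le_card_xStableSets_add (X : Finset ℕ) (k : ℕ) (hX : 2 ≤ #X) :
    (#X).choose k ≤ #(xStableSets X k) + #X * (#X - 2).choose (k - 2) := by
  set e := X.orderEmbOfFin rfl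
  have he : Set.range e = X := X.range_orderEmbOfFin rfl
  have hcover : (X.powersetCard k).filter (fun B => ¬ XStable X B) ⊆
      univ.biUnion fun i => (X.powersetCard k).filter ({e i, e (finRotate _ i)} ⊆ ·) := by
    intro B hB
    rw [mem_filter, mem_powersetCard] at hB
    obtain ⟨i, hi⟩ := exists_finRotate_pair_subset_of_not_xStable e he hB.1.1 hB.2
    exact mem_biUnion.mpr ⟨i, mem_univ _, mem_filter.mpr ⟨mem_powersetCard.mpr hB.1, hi⟩⟩
  have hpairs : ∀ i ∈ univ, #((X.powersetCard k).filter ({e i, e (finRotate _ i)} ⊆ ·)) ≤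
      (#X - 2).choose (k - 2) := fun i _ => by
    refine card_filter_powersetCard_pair_subset_le (e.injective.ne ?_) _ _
    exact (Equiv.Perm.mem_support.mp (by rw [support_finRotate_of_le hX]; exact mem_univ i)).symm
  calc (#X).choose k = #(X.powersetCard k) := (card_powersetCard _ _).symm
    _ = #(xStableSets X k) + #((X.powersetCard k).filter (fun B => ¬ XStable X B)) :=
      (card_filter_add_card_filter_not _).symm
    _ ≤ _ := by
      gcongr
      simpa using (card_le_card hcover).trans
        (card_biUnion_le.trans (sum_le_card_nsmul _ _ _ hpairs))

lemma Nat.choose_mul_eq_mul_choose_sub_two (m l : ℕ) :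
    (m + 2).choose (l + 2) * ((l + 2) * (l + 1)) = (m + 2) * (m + 1) * m.choose l := by
  have h1 := add_one_mul_choose_eq (m + 1) (l + 1)
  have h2 := add_one_mul_choose_eq m l
  calc _ = (m + 1 + 1).choose (l + 1 + 1) * (l + 1 + 1) * (l + 1) := by ring
    _ = (m + 2) * ((m + 1).choose (l + 1) * (l + 1)) := by rw [← h1]; ring
    _ = _ := by rw [← h2]; ring

lemma Nat.mul_choose_sub_two_le_choose {n k : ℕ} (hk : 2 ≤ k) (hn : 10 * k ^ 3 ≤ n) :
    (8 * k + 1) * n * (n - 2).choose (k - 2) ≤ n.choose k := by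
  obtain ⟨l, rfl⟩ : ∃ l, k = l + 2 := ⟨k - 2, by omega⟩
  have h2n : 2 ≤ n := le_trans (by nlinarith [pow_pos (show 0 < l + 2 by omega) 3]) hn
  obtain ⟨m, rfl⟩ : ∃ m, n = m + 2 := ⟨n - 2, by omega⟩
  simp only [Nat.add_sub_cancel]
  have hl : (8 * (l + 2) + 1) * ((l + 2) * (l + 1)) ≤ m + 1 := by nlinarith
  refine Nat.le_of_mul_le_mul_right ?_ (by positivity : 0 < (l + 2) * (l + 1))
  rw [Nat.choose_mul_eq_mul_choose_sub_two]
  calc _ = (8 * (l + 2) + 1) * ((l + 2) * (l + 1)) * ((m + 2) * m.choose l) := by ring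
    _ ≤ (m + 1) * ((m + 2) * m.choose l) := Nat.mul_le_mul_right _ hl
    _ = _ := by ring

theorem stmt_12_general (k : ℕ) (hk : 2 ≤ k) (X : Finset ℕ) (hX : 10 * k ^ 3 ≤ X.card)
    (F : Finset (Finset ℕ)) (hF : F ⊆ xStableSets X k)
    (hsize : (1 / (2 * X.card)) * ((xStableSets X k).card : ℝ) ≤ (F.card : ℝ))
    (γ : ℝ) (j : ℕ)
    (hpop : γ * F.card ≤ ((F.filter (fun B => j ∈ B)).card : ℝ))
    (A : Finset ℕ) (hAcard : A.card = k) (hjA : j ∉ A) :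
    γ - 1 / 4 ≤ ((F.filter (fun B => Disjoint A B)).card : ℝ) / (F.card : ℝ) := by
  set c := (#X - 2).choose (k - 2)
  have hkX : k ≤ #X := le_trans (by nlinarith [Nat.le_self_pow (by norm_num : 3 ≠ 0) k]) hX
  have hc : 0 < c := Nat.choose_pos (by omega)
  have hstable : 8 * #X * k * c ≤ #(xStableSets X k) := by
    have hlower := choose_le_card_xStableSets_add X k (by omega)
    have hchoose := Nat.mul_choose_sub_two_le_choose hk hX
    nlinarith
  have hcount := card_filter_mem_le_card_filter_disjoint_add (hF.trans (filter_subset _ _)) hjA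
  rw [hAcard] at hcount
  have hnpos : (0 : ℝ) < #X := by exact_mod_cast (show 0 < #X by omega)
  rw [one_div_mul_eq_div, div_le_iff₀ (by positivity)] at hsize
  have hquarter : 4 * k * (c : ℝ) ≤ #F := by
    have hstableℝ : 8 * #X * k * (c : ℝ) ≤ #(xStableSets X k) := by exact_mod_cast hstable
    nlinarith
  have hFpos : (0 : ℝ) < #F := lt_of_lt_of_le (by positivity) hquarter
  rw [le_div_iff₀ hFpos]
  have hcountℝ : (#(F.filter (fun B => j ∈ B)) : ℝ) ≤
      #(F.filter (fun B => Disjoint A B)) + k * c := by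
    exact_mod_cast hcount
  linarith

theorem stmt_12 (k : ℕ) (hk : 2 ≤ k) (X : Finset ℕ) (hX : 10 * k ^ 3 ≤ X.card)
    (F : Finset (Finset ℕ)) (hF : F ⊆ xStableSets X k)
    (hsize : (1 / (2 * X.card)) * ((xStableSets X k).card : ℝ) ≤ (F.card : ℝ))
    (γ : ℝ) (hγ0 : 0 < γ) (hγ1 : γ ≤ 1) (j : ℕ) (hj : j ∈ X)
    (hpop : γ * F.card ≤ ((F.filter (fun B => j ∈ B)).card : ℝ))
    (A : Finset ℕ) (hAcard : A.card = k) (hjA : j ∉ A) :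
    γ - 1 / 4 ≤ ((F.filter (fun B => Disjoint A B)).card : ℝ) / (F.card : ℝ) :=
  stmt_12_general k hk X hX F hF hsize γ j hpop A hAcard hjA
end
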